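/- arXiv:1803.04931 — 9 statements merged into one kernel-verified Lean document; each statement's English description precedes it below -/
import Mathlib

section
/- Let v ≥ k ≥ 1 be integers, let X = {1,…,v}, and let K be the family of all k-element subsets of X. Then the ideal I(K) of polynomials in ℂ[x_1,…,x_v] vanishing at c_B for every B ∈ K equals the ideal ⟨G_0⟩ generated by G_0, and moreover the zero set in ℂ^v of the ideal ⟨G_0⟩ is exactly the finite set { c_B : B ∈ K }. -/
noncomputable section

variable {σ : Type*}

/-- Characteristic 0-1 vector `c_B` of a finite set `B` of points. -/
def charVec [DecidableEq σ] (B : Finset σ) : σ → ℂ := fun i => if i ∈ B then 1 else 0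

/-- `I(ℬ)`: the ideal of all polynomials vanishing at the characteristic vector of
every block of `ℬ`. -/
def designIdeal [DecidableEq σ] (ℬ : Finset (Finset σ)) : Ideal (MvPolynomial σ ℂ) :=
  ⨅ B ∈ ℬ, RingHom.ker (MvPolynomial.eval (charVec B))

/-- The generating set `G₀ = {x₁ + ⋯ + x_v - k} ∪ {xᵢ² - xᵢ}`. -/
def G0 (σ : Type*) [Fintype σ] (k : ℕ) : Set (MvPolynomial σ ℂ) :=
  insert ((∑ i, MvPolynomial.X i) - MvPolynomial.C (k : ℂ))
    (Set.range fun i : σ => MvPolynomial.X i ^ 2 - MvPolynomial.X i)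

/-- The trivial ideal `T = ⟨G₀⟩`. -/
def trivialIdeal (σ : Type*) [Fintype σ] (k : ℕ) : Ideal (MvPolynomial σ ℂ) :=
  Ideal.span (G0 σ k)

/-- `γ₁`: minimum total degree of a non-trivial polynomial in the ideal of the design. -/
def gamma1 [Fintype σ] [DecidableEq σ] (k : ℕ) (ℬ : Finset (Finset σ)) : ℕ :=
  sInf {d : ℕ | ∃ f ∈ designIdeal ℬ, f ∉ trivialIdeal σ k ∧ f.totalDegree = d}

/-- `γ₂`: least `s` such that `I(ℬ)` is generated by polynomials of total degree `≤ s`. -/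
def gamma2 [Fintype σ] [DecidableEq σ] (ℬ : Finset (Finset σ)) : ℕ :=
  sInf {s : ℕ | ∃ G : Set (MvPolynomial σ ℂ),
    (∀ g ∈ G, g.totalDegree ≤ s) ∧ Ideal.span G = designIdeal ℬ}

/-- `ℬ` is a `t`-`(v,k,lam)` design: all blocks have size `k` and every `t`-element
subset of the point set lies in exactly `lam` blocks. -/
def IsDesign [DecidableEq σ] (ℬ : Finset (Finset σ)) (k t lam : ℕ) : Prop :=
  (∀ B ∈ ℬ, B.card = k) ∧
  ∀ T : Finset σ, T.card = t → (ℬ.filter fun B => T ⊆ B).card = lam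

section Aux

open MvPolynomial Finset

variable [Fintype σ] [DecidableEq σ]

/-- Indicator polynomial of a cube point. -/
def indicPoly (B : Finset σ) : MvPolynomial σ ℂ :=
  (∏ i ∈ B, X i) * ∏ i ∈ univ \ B, (1 - X i)

lemma sum_indicPoly : ∑ B ∈ (univ : Finset σ).powerset, indicPoly B = 1 := by
  have h := Finset.prod_add (fun i : σ => (X i : MvPolynomial σ ℂ)) (fun i => 1 - X i) univ
  rw [Finset.prod_congr rfl (fun i _ => by ring : ∀ i ∈ (univ : Finset σ),
      (X i : MvPolynomial σ ℂ) + (1 - X i) = 1), Finset.prod_const_one] at h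
  exact h.symm

lemma eval_indicPoly (B B' : Finset σ) :
    eval (charVec B') (indicPoly B) = if B = B' then 1 else 0 := by
  simp only [indicPoly, map_mul, map_prod, map_sub, map_one, eval_X]
  split_ifs with h
  · subst h
    rw [Finset.prod_eq_one fun i hi => by simp [charVec, hi],
        Finset.prod_eq_one fun i hi => by
          simp [charVec, (Finset.mem_sdiff.mp hi).2], mul_one]
  · have : ∃ i, (i ∈ B ∧ i ∉ B') ∨ (i ∉ B ∧ i ∈ B') := by
      by_contra hc
      push_neg at hc
      exact h (Finset.ext fun i => by have := hc i; tauto)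
    obtain ⟨i, hi | hi⟩ := this
    · rw [Finset.prod_eq_zero hi.1 (by simp [charVec, hi.2]), zero_mul]
    · rw [Finset.prod_eq_zero (Finset.mem_sdiff.mpr ⟨Finset.mem_univ i, hi.1⟩)
        (by simp [charVec, hi.2]), mul_zero]

lemma sq_mem_span (k : ℕ) (i : σ) : X i ^ 2 - X i ∈ Ideal.span (G0 σ k) :=
  Ideal.subset_span (Set.mem_insert_of_mem _ ⟨i, rfl⟩)

lemma sumX_mem_span (k : ℕ) :
    (∑ i, X i) - C (k : ℂ) ∈ Ideal.span (G0 σ k) :=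
  Ideal.subset_span (Set.mem_insert _ _)

lemma keymul (k : ℕ) (i : σ) (B : Finset σ) :
    X i * indicPoly B - C (charVec B i) * indicPoly B ∈ Ideal.span (G0 σ k) := by
  by_cases hi : i ∈ B
  · have h1 : charVec B i = 1 := if_pos hi
    have h2 : (∏ j ∈ B, (X j : MvPolynomial σ ℂ)) = X i * ∏ j ∈ B.erase i, X j :=
      (Finset.mul_prod_erase _ _ hi).symm
    have key : X i * indicPoly B - C (charVec B i) * indicPoly B
        = (X i ^ 2 - X i) * ((∏ j ∈ B.erase i, X j) * ∏ j ∈ univ \ B, (1 - X j)) := by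
      rw [h1, map_one, indicPoly, h2]; ring
    rw [key]
    exact Ideal.mul_mem_right _ _ (sq_mem_span k i)
  · have h1 : charVec B i = 0 := if_neg hi
    have hic : i ∈ univ \ B := Finset.mem_sdiff.mpr ⟨Finset.mem_univ i, hi⟩
    have h2 : (∏ j ∈ univ \ B, (1 - X j : MvPolynomial σ ℂ))
        = (1 - X i) * ∏ j ∈ (univ \ B).erase i, (1 - X j) :=
      (Finset.mul_prod_erase _ _ hic).symm
    have key : X i * indicPoly B - C (charVec B i) * indicPoly B
        = -((X i ^ 2 - X i) * ((∏ j ∈ B, X j) * ∏ j ∈ (univ \ B).erase i, (1 - X j))) := by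
      rw [h1, map_zero, indicPoly, h2]; ring
    rw [key]
    exact neg_mem (Ideal.mul_mem_right _ _ (sq_mem_span k i))

lemma sub_interp_mem (k : ℕ) (f : MvPolynomial σ ℂ) :
    f - ∑ B ∈ (univ : Finset σ).powerset, C (eval (charVec B) f) * indicPoly B
      ∈ Ideal.span (G0 σ k) := by
  induction f using MvPolynomial.induction_on with
  | C a =>
      have hs : ∑ B ∈ (univ : Finset σ).powerset,
          C (eval (charVec B) (C a)) * indicPoly B = C a := by
        simp only [eval_C]
        rw [← Finset.mul_sum, sum_indicPoly, mul_one]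
      rw [hs, sub_self]
      exact Ideal.zero_mem _
  | add p q hp hq =>
      have key : ∑ B ∈ (univ : Finset σ).powerset,
          C (eval (charVec B) (p + q)) * indicPoly B
          = (∑ B ∈ (univ : Finset σ).powerset, C (eval (charVec B) p) * indicPoly B)
            + ∑ B ∈ (univ : Finset σ).powerset, C (eval (charVec B) q) * indicPoly B := by
        rw [← Finset.sum_add_distrib]
        exact Finset.sum_congr rfl fun B _ => by rw [map_add, map_add, add_mul]
      rw [key]
      have h := Ideal.add_mem _ hp hq
      convert h using 1
      ring
  | mul_X p i hp =>
      have e1 : ∑ B ∈ (univ : Finset σ).powerset,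
          C (eval (charVec B) (p * X i)) * indicPoly B
          = ∑ B ∈ (univ : Finset σ).powerset,
              C (eval (charVec B) p) * (C (charVec B i) * indicPoly B) :=
        Finset.sum_congr rfl fun B _ => by rw [map_mul, eval_X, map_mul]; ring
      rw [e1]
      have e2 : ∑ B ∈ (univ : Finset σ).powerset,
          C (eval (charVec B) p) * (X i * indicPoly B - C (charVec B i) * indicPoly B)
          = X i * (∑ B ∈ (univ : Finset σ).powerset, C (eval (charVec B) p) * indicPoly B)
            - ∑ B ∈ (univ : Finset σ).powerset,
                C (eval (charVec B) p) * (C (charVec B i) * indicPoly B) := by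
        rw [Finset.mul_sum, ← Finset.sum_sub_distrib]
        exact Finset.sum_congr rfl fun B _ => by ring
      have m1 : (p - ∑ B ∈ (univ : Finset σ).powerset,
          C (eval (charVec B) p) * indicPoly B) * X i ∈ Ideal.span (G0 σ k) :=
        Ideal.mul_mem_right _ _ hp
      have m2 : ∑ B ∈ (univ : Finset σ).powerset,
          C (eval (charVec B) p) * (X i * indicPoly B - C (charVec B i) * indicPoly B)
          ∈ Ideal.span (G0 σ k) :=
        Ideal.sum_mem _ fun B _ => Ideal.mul_mem_left _ _ (keymul k i B)
      have h := Ideal.add_mem _ m1 m2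
      rw [e2] at h
      convert h using 1
      ring

lemma eval_sumX_sub (k : ℕ) (B : Finset σ) :
    eval (charVec B) ((∑ i, X i) - C (k : ℂ)) = (B.card : ℂ) - k := by
  rw [map_sub, map_sum, eval_C]
  congr 1
  simp only [eval_X, charVec]
  rw [Finset.sum_ite_mem, Finset.univ_inter, Finset.sum_const, nsmul_eq_mul, mul_one]

lemma mem_designIdeal_iff (ℬ : Finset (Finset σ)) (f : MvPolynomial σ ℂ) :
    f ∈ designIdeal ℬ ↔ ∀ B ∈ ℬ, eval (charVec B) f = 0 := by
  simp [designIdeal, Ideal.mem_iInf, RingHom.mem_ker]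

lemma span_le_designIdeal (k : ℕ) :
    Ideal.span (G0 σ k) ≤ designIdeal (Finset.powersetCard k (univ : Finset σ)) := by
  rw [Ideal.span_le]
  intro g hg
  rw [SetLike.mem_coe, mem_designIdeal_iff]
  intro B hB
  rw [Finset.mem_powersetCard_univ] at hB
  rcases hg with hg | ⟨i, rfl⟩
  · rw [hg, eval_sumX_sub, hB, sub_self]
  · simp only [map_sub, map_pow, eval_X, charVec]
    split_ifs <;> norm_num

lemma designIdeal_le_span (k : ℕ) :
    designIdeal (Finset.powersetCard k (univ : Finset σ)) ≤ Ideal.span (G0 σ k) := by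
  intro f hf
  rw [mem_designIdeal_iff] at hf
  set s : MvPolynomial σ ℂ := (∑ i, X i) - C (k : ℂ) with hs
  set g : MvPolynomial σ ℂ := ∑ B ∈ (univ : Finset σ).powerset.filter (fun B => B.card ≠ k),
      C (eval (charVec B) f / ((B.card : ℂ) - k)) * indicPoly B with hg
  have hzero : ∀ B ∈ (univ : Finset σ).powerset, eval (charVec B) (f - s * g) = 0 := by
    intro B _
    have hevg : eval (charVec B) g
        = if B.card ≠ k then eval (charVec B) f / ((B.card : ℂ) - k) else 0 := by
      rw [hg, map_sum]
      rw [Finset.sum_congr rfl fun B' _ => by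
        rw [map_mul, eval_C, eval_indicPoly, mul_ite, mul_one, mul_zero]]
      rw [Finset.sum_ite_eq' ((univ : Finset σ).powerset.filter (fun B => B.card ≠ k)) B
        (fun B' => eval (charVec B') f / ((B'.card : ℂ) - k))]
      simp [Finset.mem_filter]
    rw [map_sub, map_mul, hs, eval_sumX_sub]
    by_cases hBk : B.card = k
    · rw [hf B (Finset.mem_powersetCard_univ.mpr hBk), hBk, sub_self, zero_mul, sub_zero]
    · rw [hevg, if_pos hBk]
      have hne : (B.card : ℂ) - k ≠ 0 :=
        sub_ne_zero.mpr (fun h => hBk (Nat.cast_injective h))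
      field_simp
      ring
  have hmem : f - s * g ∈ Ideal.span (G0 σ k) := by
    have h := sub_interp_mem k (f - s * g)
    rw [Finset.sum_eq_zero (fun B hB => by rw [hzero B hB, map_zero, zero_mul]),
      sub_zero] at h
    exact h
  have : f = (f - s * g) + g * s := by ring
  rw [this]
  exact Ideal.add_mem _ hmem (Ideal.mul_mem_left _ _ (sumX_mem_span k))

end Aux

open MvPolynomial Finset in
/-- for the complete `k`-uniform hypergraph, the vanishing ideal is
`⟨G₀⟩`, and the zero set of `⟨G₀⟩` is exactly the set of characteristic vectors of
`k`-subsets. -/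
theorem ideal_of_complete_uniform_hypergraph (v k : ℕ) (hk : 1 ≤ k) (hkv : k ≤ v) :
    designIdeal (Finset.powersetCard k (Finset.univ : Finset (Fin v))) =
      Ideal.span (G0 (Fin v) k) ∧
    {c : Fin v → ℂ | ∀ f ∈ Ideal.span (G0 (Fin v) k), MvPolynomial.eval c f = 0} =
      {c : Fin v → ℂ | ∃ B : Finset (Fin v), B.card = k ∧ c = charVec B} := by
  constructor
  · exact le_antisymm (designIdeal_le_span k) (span_le_designIdeal k)
  · ext c
    simp only [Set.mem_setOf_eq]
    constructor
    · intro hc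
      classical
      have h01 : ∀ i, c i = 0 ∨ c i = 1 := by
        intro i
        have := hc _ (Ideal.subset_span (Set.mem_insert_of_mem _ ⟨i, rfl⟩))
        rw [map_sub, map_pow, eval_X] at this
        have hfac : c i * (c i - 1) = 0 := by linear_combination this
        rcases mul_eq_zero.mp hfac with h | h
        · exact Or.inl h
        · exact Or.inr (by linear_combination h)
      have hsum := hc _ (Ideal.subset_span (Set.mem_insert _ _))
      rw [map_sub, map_sum, eval_C] at hsum
      simp only [eval_X] at hsum
      set B : Finset (Fin v) := univ.filter (fun i => c i = 1) with hB
      have hcB : c = charVec B := by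
        funext i
        rcases h01 i with h | h
        · simp [charVec, hB, h]
        · simp [charVec, hB, h]
      have hsum2 : ∑ i, c i = (B.card : ℂ) := by
        rw [Finset.card_filter]
        push_cast
        exact Finset.sum_congr rfl fun i _ => by
          rcases h01 i with h | h <;> simp [h]
      have hcard : B.card = k := by
        have : (B.card : ℂ) = (k : ℂ) := by linear_combination hsum - hsum2
        exact_mod_cast this
      exact ⟨B, hcard, hcB⟩
    · rintro ⟨B, hBk, rfl⟩ f hf
      have hmem : f ∈ designIdeal (Finset.powersetCard k (univ : Finset (Fin v))) :=
        span_le_designIdeal k hf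
      rw [mem_designIdeal_iff] at hmem
      exact hmem B (Finset.mem_powersetCard_univ.mpr hBk)
end
end

section
/- Let 1 ≤ t ≤ k ≤ v and let ℬ be a non-empty family of k-element subsets of X = {1,…,v}. Then ℬ is a t-design (i.e., there exists λ such that every t-element subset of X is contained in exactly λ members of ℬ) if and only if for every polynomial f ∈ ℂ[x_1,…,x_v] of total degree at most t, the average of f(c_B) over all B ∈ ℬ equals the average of f(c_B) over all k-element subsets B of X; that is, (1/|ℬ|) Σ_{B∈ℬ} f(c_B) = (1/C(v,k)) Σ_{|B|=k} f(c_B). -/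
noncomputable section

variable {σ : Type*}

open Finset MvPolynomial

section Aux
variable {v : ℕ}


lemma count_subsets (U S : Finset (Fin v)) (hS : S ⊆ U) (r : ℕ) (hr : S.card ≤ r) :
    ((powersetCard r U).filter fun T => S ⊆ T).card = (U.card - S.card).choose (r - S.card) := by
  rw [← Finset.card_sdiff_of_subset hS, ← card_powersetCard]
  apply Finset.card_bij' (fun T _ => T \ S) (fun W _ => W ∪ S)
  · intro T hT
    simp only [mem_filter, mem_powersetCard] at hT ⊢
    refine ⟨sdiff_subset_sdiff hT.1.1 (le_refl _), ?_⟩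
    rw [card_sdiff_of_subset hT.2, hT.1.2]
  · intro W hW
    simp only [mem_filter, mem_powersetCard] at hW ⊢
    have hd : Disjoint W S := sdiff_disjoint.mono_left hW.1
    refine ⟨⟨union_subset (hW.1.trans sdiff_subset) hS, ?_⟩, subset_union_right⟩
    rw [card_union_of_disjoint hd, hW.2, Nat.sub_add_cancel hr]
  · intro T hT
    simp only [mem_filter] at hT
    exact sdiff_union_of_subset hT.2
  · intro W hW
    simp only [mem_filter, mem_powersetCard] at hW
    exact union_sdiff_cancel_right (sdiff_disjoint.mono_left hW.1)

lemma eval_prod_X (B T : Finset (Fin v)) :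
    eval (charVec B) (∏ i ∈ T, X i) = if T ⊆ B then 1 else 0 := by
  rw [map_prod]
  simp only [eval_X, charVec]
  rw [Finset.prod_boole]
  by_cases h : T ⊆ B
  · rw [if_pos (fun i hi => h hi), if_pos h]
  · rw [if_neg (fun hh => h fun i hi => hh i hi), if_neg h]

lemma eval_monomial_charVec (B : Finset (Fin v)) (m : (Fin v) →₀ ℕ) (c : ℂ) :
    eval (charVec B) (monomial m c) = if (m.support : Finset (Fin v)) ⊆ B then c else 0 := by
  rw [eval_monomial, Finsupp.prod]
  have : ∀ i ∈ m.support, (charVec B i) ^ (m i) = if i ∈ B then 1 else 0 := by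
    intro i hi
    have hm : m i ≠ 0 := Finsupp.mem_support_iff.mp hi
    unfold charVec
    by_cases h : i ∈ B <;> simp [h, zero_pow hm]
  rw [Finset.prod_congr rfl this, Finset.prod_boole]
  by_cases h : m.support ⊆ B
  · rw [if_pos (fun i hi => h hi), if_pos h, mul_one]
  · rw [if_neg (fun hh => h fun i hi => hh i hi), if_neg h, mul_zero]

lemma sum_eval (ℱ : Finset (Finset (Fin v))) (f : MvPolynomial (Fin v) ℂ) :
    ∑ B ∈ ℱ, eval (charVec B) f =
      ∑ m ∈ f.support, coeff m f * ((ℱ.filter fun B => m.support ⊆ B).card : ℂ) := by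
  have h1 : ∀ B : Finset (Fin v), eval (charVec B) f
      = ∑ m ∈ f.support, if (m.support : Finset (Fin v)) ⊆ B then coeff m f else 0 := by
    intro B
    conv_lhs => rw [f.as_sum]
    rw [map_sum]
    exact Finset.sum_congr rfl fun m _ => eval_monomial_charVec B m _
  rw [Finset.sum_congr rfl fun B _ => h1 B, Finset.sum_comm]
  refine Finset.sum_congr rfl fun m _ => ?_
  rw [← Finset.sum_filter, Finset.sum_const, nsmul_eq_mul, mul_comm]

lemma design_count (ℱ : Finset (Finset (Fin v))) (k t lam : ℕ) (htk : t ≤ k)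
    (hc : ∀ B ∈ ℱ, B.card = k)
    (hd : ∀ T : Finset (Fin v), T.card = t → (ℱ.filter fun B => T ⊆ B).card = lam)
    (S : Finset (Fin v)) (hs : S.card ≤ t) :
    (ℱ.filter fun B => S ⊆ B).card * (k - S.card).choose (t - S.card)
      = (v - S.card).choose (t - S.card) * lam := by
  classical
  set P := (powersetCard t (univ : Finset (Fin v))).filter (fun T => S ⊆ T) with hP
  have hPcard : P.card = (v - S.card).choose (t - S.card) := by
    rw [hP, count_subsets _ _ (subset_univ S) t hs, card_univ, Fintype.card_fin]
  have key : ∑ T ∈ P, (ℱ.filter fun B => T ⊆ B).card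
      = ∑ B ∈ ℱ, (P.filter fun T => T ⊆ B).card := by
    simp only [Finset.card_filter]
    rw [Finset.sum_comm]
  have lhs : ∑ T ∈ P, (ℱ.filter fun B => T ⊆ B).card
      = (v - S.card).choose (t - S.card) * lam := by
    rw [Finset.sum_congr rfl fun T hT => hd T (mem_powersetCard.mp (mem_filter.mp hT).1).2,
      Finset.sum_const, smul_eq_mul, hPcard]
  have inner : ∀ B ∈ ℱ, (P.filter fun T => T ⊆ B).card
      = if S ⊆ B then (k - S.card).choose (t - S.card) else 0 := by
    intro B hB
    have hPB : P.filter (fun T => T ⊆ B) = (powersetCard t B).filter fun T => S ⊆ T := by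
      ext T
      simp only [hP, mem_filter, mem_powersetCard, subset_univ, true_and]
      tauto
    rw [hPB]
    by_cases h : S ⊆ B
    · rw [if_pos h, count_subsets B S h t hs, hc B hB]
    · rw [if_neg h, Finset.card_eq_zero, Finset.filter_eq_empty_iff]
      intro T hT hST
      exact h (hST.trans (mem_powersetCard.mp hT).1)
  have rhs : ∑ B ∈ ℱ, (P.filter fun T => T ⊆ B).card
      = (ℱ.filter fun B => S ⊆ B).card * (k - S.card).choose (t - S.card) := by
    rw [Finset.sum_congr rfl inner, ← Finset.sum_filter, Finset.sum_const, smul_eq_mul]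
  rw [← rhs, ← key, lhs]


end Aux

/-- a `k`-uniform hypergraph is a `t`-design iff every polynomial of total
degree at most `t` has the same average over `ℬ` as over all `k`-subsets. -/

theorem design_iff_averages (v k t : ℕ) (ht : 1 ≤ t) (htk : t ≤ k) (hkv : k ≤ v)
    (ℬ : Finset (Finset (Fin v))) (hcard : ∀ B ∈ ℬ, B.card = k) (hne : ℬ.Nonempty) :
    (∃ lam : ℕ, ∀ T : Finset (Fin v), T.card = t →
        (ℬ.filter fun B => T ⊆ B).card = lam) ↔
    (∀ f : MvPolynomial (Fin v) ℂ, f.totalDegree ≤ t →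
      (ℬ.card : ℂ)⁻¹ * ∑ B ∈ ℬ, MvPolynomial.eval (charVec B) f =
      ((v.choose k : ℕ) : ℂ)⁻¹ *
        ∑ B ∈ Finset.powersetCard k (Finset.univ : Finset (Fin v)),
          MvPolynomial.eval (charVec B) f) := by
  classical
  have htv : t ≤ v := htk.trans hkv
  set 𝒦 := Finset.powersetCard k (Finset.univ : Finset (Fin v)) with h𝒦
  have hKcard : 𝒦.card = v.choose k := by
    rw [h𝒦, card_powersetCard, card_univ, Fintype.card_fin]
  have hKc : ∀ B ∈ 𝒦, B.card = k := fun B hB => (mem_powersetCard.mp hB).2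
  have hKd : ∀ T : Finset (Fin v), T.card = t →
      (𝒦.filter fun B => T ⊆ B).card = (v - t).choose (k - t) := by
    intro T hT
    rw [h𝒦, count_subsets _ _ (subset_univ T) k (hT ▸ htk), card_univ, Fintype.card_fin, hT]
  have hb0 : (ℬ.card : ℂ) ≠ 0 := Nat.cast_ne_zero.mpr (Finset.card_ne_zero.mpr hne)
  have hK0 : ((v.choose k : ℕ) : ℂ) ≠ 0 := Nat.cast_ne_zero.mpr (Nat.choose_pos hkv).ne'
  constructor
  · rintro ⟨lam, hlam⟩ f hf
    have hb3 : ℬ.card * k.choose t = v.choose t * lam := by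
      have := design_count ℬ k t lam htk hcard hlam ∅ (Nat.zero_le t)
      simpa using this
    have hK3 : 𝒦.card * k.choose t = v.choose t * ((v - t).choose (k - t)) := by
      have := design_count 𝒦 k t _ htk hKc hKd ∅ (Nat.zero_le t)
      simpa using this
    have key : ∀ S : Finset (Fin v), S.card ≤ t →
        ((ℬ.filter fun B => S ⊆ B).card : ℂ) * ((v.choose k : ℕ) : ℂ)
        = ((𝒦.filter fun B => S ⊆ B).card : ℂ) * (ℬ.card : ℂ) := by
      intro S hS
      have h1 := design_count ℬ k t lam htk hcard hlam S hS
      have h2 := design_count 𝒦 k t _ htk hKc hKd S hS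
      have hc1 : 0 < (k - S.card).choose (t - S.card) :=
        Nat.choose_pos (Nat.sub_le_sub_right htk _)
      have hc3 : 0 < k.choose t := Nat.choose_pos htk
      have hnat : (ℬ.filter fun B => S ⊆ B).card * 𝒦.card
            * ((k - S.card).choose (t - S.card) * k.choose t)
          = (𝒦.filter fun B => S ⊆ B).card * ℬ.card
            * ((k - S.card).choose (t - S.card) * k.choose t) := by
      --  A*K*(c1*c3) = (A*c1)*(K*c3) = (c2*lam)*(c4*lam*) = (c2*lam*)*(c4*lam)
        calc (ℬ.filter fun B => S ⊆ B).card * 𝒦.card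
              * ((k - S.card).choose (t - S.card) * k.choose t)
            = ((ℬ.filter fun B => S ⊆ B).card * (k - S.card).choose (t - S.card))
              * (𝒦.card * k.choose t) := by ring
          _ = ((v - S.card).choose (t - S.card) * lam)
              * (v.choose t * ((v - t).choose (k - t))) := by rw [h1, hK3]
          _ = ((v - S.card).choose (t - S.card) * ((v - t).choose (k - t)))
              * (v.choose t * lam) := by ring
          _ = ((𝒦.filter fun B => S ⊆ B).card * (k - S.card).choose (t - S.card))
              * (ℬ.card * k.choose t) := by rw [h2, hb3]
          _ = _ := by ring
      have := Nat.eq_of_mul_eq_mul_right (Nat.mul_pos hc1 hc3) hnat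
      rw [hKcard] at this
      exact_mod_cast this
    rw [sum_eval, sum_eval, Finset.mul_sum, Finset.mul_sum]
    refine Finset.sum_congr rfl fun m hm => ?_
    have hsupp : m.support.card ≤ t := by
      refine le_trans (le_trans ?_ (le_totalDegree hm)) hf
      rw [Finsupp.sum]
      calc m.support.card = ∑ _i ∈ m.support, 1 := by simp
        _ ≤ ∑ i ∈ m.support, m i :=
          Finset.sum_le_sum fun i hi => Nat.one_le_iff_ne_zero.mpr (Finsupp.mem_support_iff.mp hi)
    have hkey := key m.support hsupp
    field_simp
    linear_combination (coeff m f) * hkey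
  · intro h
    obtain ⟨T₀, -, hT₀⟩ := Finset.exists_subset_card_eq
      (show t ≤ (univ : Finset (Fin v)).card by rw [card_univ, Fintype.card_fin]; exact htv)
    refine ⟨(ℬ.filter fun B => T₀ ⊆ B).card, fun T hT => ?_⟩
    have deg : ∀ T' : Finset (Fin v), T'.card = t →
        (∏ i ∈ T', X i : MvPolynomial (Fin v) ℂ).totalDegree ≤ t := by
      intro T' hT'
      calc (∏ i ∈ T', X i : MvPolynomial (Fin v) ℂ).totalDegree
          ≤ ∑ i ∈ T', (X i : MvPolynomial (Fin v) ℂ).totalDegree :=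
            totalDegree_finset_prod _ _
        _ = T'.card := by simp [totalDegree_X]
        _ = t := hT'
    have ev : ∀ (ℱ : Finset (Finset (Fin v))) (T' : Finset (Fin v)),
        ∑ B ∈ ℱ, eval (charVec B) (∏ i ∈ T', X i)
        = ((ℱ.filter fun B => T' ⊆ B).card : ℂ) := by
      intro ℱ T'
      simp only [eval_prod_X]
      rw [Finset.sum_boole]
    have e1 := h _ (deg T hT)
    have e2 := h _ (deg T₀ hT₀)
    rw [ev, ev, hKd T hT] at e1
    rw [ev, ev, hKd T₀ hT₀] at e2
    have := mul_left_cancel₀ (inv_ne_zero hb0) (e1.trans e2.symm)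
    exact_mod_cast this
end
end

section
/- Let λ ≥ 1 and let ℬ be a t-(v,k,λ) design on X = {1,…,v} which is non-empty and not equal to the family of all k-subsets of X. Let s be the smallest positive integer such that C(v,s) > |ℬ|, and assume s ≤ k and s ≤ v − k. Then γ1(ℬ) ≤ s. -/
noncomputable section

variable {σ : Type*}

open Finset in
private 
lemma count_lemma {α : Type*} [Fintype α] [DecidableEq α] (S S₀ : Finset α) (s k i j : ℕ)
    (hS : S.card = s) (hS0 : S₀.card = s) (hj : (S ∩ S₀).card = j) (hji : j ≤ i)
    (hik : s + i ≤ k + j) :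
    ((Finset.powersetCard k (Finset.univ : Finset α)).filter
        (fun B => S ⊆ B ∧ (B ∩ S₀).card = i)).card
      = (s - j).choose (i - j) *
        ((Fintype.card α - (2 * s - j)).choose (k - s - (i - j))) := by
  have hcard1 : (S₀ \ S).card = s - j := by
    have := Finset.card_sdiff_add_card_inter S₀ S
    rw [Finset.inter_comm] at this
    omega
  have hcard2 : ((Finset.univ : Finset α) \ (S ∪ S₀)).card
      = Fintype.card α - (2 * s - j) := by
    have h1 := Finset.card_sdiff_add_card_inter (Finset.univ : Finset α) (S ∪ S₀)
    have h2 := Finset.card_union_add_card_inter S S₀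
    have h3 : (Finset.univ : Finset α) ∩ (S ∪ S₀) = S ∪ S₀ := by
      simp
    rw [h3] at h1
    have h4 : ((Finset.univ : Finset α)).card = Fintype.card α := Finset.card_univ
    omega
  rw [show (s - j).choose (i - j) * ((Fintype.card α - (2 * s - j)).choose (k - s - (i - j)))
      = ((Finset.powersetCard (i - j) (S₀ \ S)) ×ˢ
         (Finset.powersetCard (k - s - (i - j)) ((Finset.univ : Finset α) \ (S ∪ S₀)))).card by
    rw [Finset.card_product, Finset.card_powersetCard, Finset.card_powersetCard, hcard1, hcard2]]
  refine Finset.card_bij' (fun B _ => ((B ∩ S₀) \ S, B \ (S ∪ S₀)))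
    (fun P _ => S ∪ P.1 ∪ P.2) ?_ ?_ ?_ ?_
  · -- forward maps into product
    intro B hB
    simp only [Finset.mem_filter, Finset.mem_powersetCard] at hB
    obtain ⟨⟨-, hBk⟩, hSB, hBi⟩ := hB
    have hBS0S : (B ∩ S₀) ∩ S = S ∩ S₀ := by
      ext x; simp only [Finset.mem_inter]
      constructor
      · tauto
      · intro ⟨h1, h2⟩; exact ⟨⟨hSB h1, h2⟩, h1⟩
    have hP : ((B ∩ S₀) \ S).card = i - j := by
      have := Finset.card_sdiff_add_card_inter (B ∩ S₀) S
      rw [hBS0S, hj, hBi] at this; omega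
    have hBcap : B ∩ (S ∪ S₀) = S ∪ (B ∩ S₀) := by
      ext x; simp only [Finset.mem_inter, Finset.mem_union]
      constructor
      · tauto
      · rintro (h | ⟨h1, h2⟩)
        · exact ⟨hSB h, Or.inl h⟩
        · exact ⟨h1, Or.inr h2⟩
    have hScapB : S ∩ (B ∩ S₀) = S ∩ S₀ := by
      ext x; simp only [Finset.mem_inter]
      constructor
      · tauto
      · intro ⟨h1, h2⟩; exact ⟨h1, hSB h1, h2⟩
    have hQ : (B \ (S ∪ S₀)).card = k - s - (i - j) := by
      have h1 := Finset.card_sdiff_add_card_inter B (S ∪ S₀)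
      have h2 := Finset.card_union_add_card_inter S (B ∩ S₀)
      rw [hBcap] at h1
      rw [hScapB, hj, hBi, hS] at h2
      omega
    simp only [Finset.mem_product, Finset.mem_powersetCard]
    exact ⟨⟨Finset.sdiff_subset_sdiff Finset.inter_subset_right le_rfl, hP⟩,
      ⟨Finset.sdiff_subset_sdiff (Finset.subset_univ B) le_rfl, hQ⟩⟩
  · -- backward maps into filter
    intro P hP
    obtain ⟨P, Q⟩ := P
    simp only [Finset.mem_product, Finset.mem_powersetCard] at hP
    obtain ⟨⟨hPsub, hPcard⟩, hQsub, hQcard⟩ := hP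
    have hPS0 : ∀ x ∈ P, x ∈ S₀ ∧ x ∉ S := by
      intro x hx; have := hPsub hx; simp only [Finset.mem_sdiff] at this; exact this
    have hQout : ∀ x ∈ Q, x ∉ S ∧ x ∉ S₀ := by
      intro x hx; have := hQsub hx
      simp only [Finset.mem_sdiff, Finset.mem_union, Finset.mem_univ, true_and] at this
      tauto
    have hd1 : Disjoint S P := by
      rw [Finset.disjoint_right]; intro x hx; exact (hPS0 x hx).2
    have hd2 : Disjoint (S ∪ P) Q := by
      rw [Finset.disjoint_right]; intro x hx
      simp only [Finset.mem_union]
      rintro (h | h)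
      · exact (hQout x hx).1 h
      · exact (hQout x hx).2 (hPS0 x h).1
    have hcardU : (S ∪ P ∪ Q).card = k := by
      rw [Finset.card_union_of_disjoint hd2, Finset.card_union_of_disjoint hd1,
        hS, hPcard, hQcard]
      omega
    have hinter : (S ∪ P ∪ Q) ∩ S₀ = (S ∩ S₀) ∪ P := by
      ext x
      simp only [Finset.mem_inter, Finset.mem_union]
      constructor
      · rintro ⟨(h | h) | h, h0⟩
        · exact Or.inl ⟨h, h0⟩
        · exact Or.inr h
        · exact absurd h0 (hQout x h).2
      · rintro (⟨h1, h2⟩ | h)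
        · exact ⟨Or.inl (Or.inl h1), h2⟩
        · exact ⟨Or.inl (Or.inr h), (hPS0 x h).1⟩
    have hdisj3 : Disjoint (S ∩ S₀) P :=
      hd1.mono_left Finset.inter_subset_left
    simp only [Finset.mem_filter, Finset.mem_powersetCard]
    refine ⟨⟨Finset.subset_univ _, hcardU⟩, ?_, ?_⟩
    · exact (Finset.subset_union_left).trans Finset.subset_union_left
    · rw [hinter, Finset.card_union_of_disjoint hdisj3, hj, hPcard]
      omega
  · -- left inverse
    intro B hB
    simp only [Finset.mem_filter, Finset.mem_powersetCard] at hB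
    obtain ⟨⟨-, hBk⟩, hSB, hBi⟩ := hB
    ext x
    simp only [Finset.mem_union, Finset.mem_sdiff, Finset.mem_inter]
    constructor
    · rintro ((h | ⟨⟨h1, h2⟩, h3⟩) | ⟨h1, h2⟩)
      · exact hSB h
      · exact h1
      · exact h1
    · intro hxB
      by_cases hxS : x ∈ S
      · exact Or.inl (Or.inl hxS)
      · by_cases hxS0 : x ∈ S₀
        · exact Or.inl (Or.inr ⟨⟨hxB, hxS0⟩, hxS⟩)
        · exact Or.inr ⟨hxB, by simp [hxS, hxS0]⟩
  · -- right inverse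
    intro P hP
    obtain ⟨P, Q⟩ := P
    simp only [Finset.mem_product, Finset.mem_powersetCard] at hP
    obtain ⟨⟨hPsub, hPcard⟩, hQsub, hQcard⟩ := hP
    have hPS0 : ∀ x ∈ P, x ∈ S₀ ∧ x ∉ S := by
      intro x hx; have := hPsub hx; simp only [Finset.mem_sdiff] at this; exact this
    have hQout : ∀ x ∈ Q, x ∉ S ∧ x ∉ S₀ := by
      intro x hx; have := hQsub hx
      simp only [Finset.mem_sdiff, Finset.mem_union, Finset.mem_univ, true_and] at this
      tauto
    have e1 : ((S ∪ P ∪ Q) ∩ S₀) \ S = P := by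
      ext x
      simp only [Finset.mem_sdiff, Finset.mem_inter, Finset.mem_union]
      constructor
      · rintro ⟨⟨(h | h) | h, h0⟩, hns⟩
        · exact absurd h hns
        · exact h
        · exact absurd h0 (hQout x h).2
      · intro h
        exact ⟨⟨Or.inl (Or.inr h), (hPS0 x h).1⟩, (hPS0 x h).2⟩
    have e2 : (S ∪ P ∪ Q) \ (S ∪ S₀) = Q := by
      ext x
      simp only [Finset.mem_sdiff, Finset.mem_union]
      constructor
      · rintro ⟨(h | h) | h, hn⟩
        · exact absurd (Or.inl h) hn
        · exact absurd (Or.inr (hPS0 x h).1) hn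
        · exact h
      · intro h
        refine ⟨Or.inr h, ?_⟩
        rintro (h1 | h1)
        · exact (hQout x h).1 h1
        · exact (hQout x h).2 h1
    simp only []
    rw [Prod.mk.injEq]
    exact ⟨e1, e2⟩

open Finset in
private lemma gottlieb {v s k : ℕ} (hsk : s ≤ k) (hkv : s + k ≤ v)
    (lam : Finset (Fin v) → ℂ)
    (h : ∀ B : Finset (Fin v), B.card = k →
      ∑ S ∈ Finset.powersetCard s (Finset.univ : Finset (Fin v)),
        lam S * (if S ⊆ B then 1 else 0) = 0)
    (S₀ : Finset (Fin v)) (hS₀ : S₀.card = s) : lam S₀ = 0 := by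
  classical
  -- the triangular matrix
  set M : Matrix (Fin (s+1)) (Fin (s+1)) ℂ := fun j i =>
    if (j : ℕ) ≤ i ∧ s + (i : ℕ) ≤ k + j then
      (((s - (j : ℕ)).choose ((i : ℕ) - j) *
        ((v - (2 * s - (j : ℕ))).choose (k - s - ((i : ℕ) - j))) : ℕ) : ℂ)
    else 0 with hM
  have htri : M.BlockTriangular id := by
    intro i j hij
    simp only [id] at hij
    simp only [hM]
    rw [if_neg]
    omega
  have hdiag : ∀ j : Fin (s+1), M j j ≠ 0 := by
    intro j
    simp only [hM, le_refl, true_and, if_pos (by omega : (j:ℕ) ≤ (j:ℕ) ∧ s + (j:ℕ) ≤ k + (j:ℕ))]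
    have h1 : (0 : ℕ) < (s - (j : ℕ)).choose ((j : ℕ) - j) := by
      simp [Nat.sub_self]
    have h2 : (0 : ℕ) < (v - (2 * s - (j : ℕ))).choose (k - s - ((j : ℕ) - j)) := by
      rw [Nat.sub_self]
      exact Nat.choose_pos (by omega)
    exact Nat.cast_ne_zero.mpr (Nat.mul_ne_zero h1.ne' h2.ne')
  have hdet : IsUnit M.det := by
    rw [Matrix.det_of_upperTriangular htri]
    simp only [isUnit_iff_ne_zero]
    exact Finset.prod_ne_zero_iff.mpr fun j _ => hdiag j
  -- solve M c = e
  set e : Fin (s+1) → ℂ := fun j => if (j : ℕ) = s then 1 else 0 with he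
  set c : Fin (s+1) → ℂ := M⁻¹.mulVec e with hc
  have hMc : M.mulVec c = e := by
    rw [hc, Matrix.mulVec_mulVec, Matrix.mul_nonsing_inv _ hdet, Matrix.one_mulVec]
  -- index function
  set idx : Finset (Fin v) → Fin (s+1) := fun B =>
    ⟨min (B ∩ S₀).card s, Nat.lt_succ_of_le (min_le_right _ _)⟩ with hidx
  -- the key inner sum computation
  have key : ∀ S ∈ Finset.powersetCard s (Finset.univ : Finset (Fin v)),
      ∑ B ∈ Finset.powersetCard k (Finset.univ : Finset (Fin v)),
        c (idx B) * (if S ⊆ B then 1 else 0) = if S = S₀ then 1 else 0 := by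
    intro S hS
    rw [Finset.mem_powersetCard] at hS
    obtain ⟨-, hScard⟩ := hS
    have hjle : (S ∩ S₀).card ≤ s := by
      calc (S ∩ S₀).card ≤ S.card := Finset.card_le_card Finset.inter_subset_left
        _ = s := hScard
    set jf : Fin (s+1) := ⟨(S ∩ S₀).card, Nat.lt_succ_of_le hjle⟩ with hjf
    have step1 : ∑ B ∈ Finset.powersetCard k (Finset.univ : Finset (Fin v)),
        c (idx B) * (if S ⊆ B then 1 else 0)
        = ∑ B ∈ (Finset.powersetCard k (Finset.univ : Finset (Fin v))).filter
            (fun B => S ⊆ B), c (idx B) := by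
      rw [Finset.sum_filter]
      exact Finset.sum_congr rfl fun B _ => by split <;> simp
    rw [step1]
    rw [← Finset.sum_fiberwise_of_maps_to (fun B _ => Finset.mem_univ (idx B))
      (fun B => c (idx B))]
    have step2 : ∀ i : Fin (s+1),
        ∑ B ∈ ((Finset.powersetCard k (Finset.univ : Finset (Fin v))).filter
            (fun B => S ⊆ B)).filter (fun B => idx B = i), c (idx B)
        = M jf i * c i := by
      intro i
      rw [Finset.filter_filter]
      have hfil : ∀ B ∈ Finset.powersetCard k (Finset.univ : Finset (Fin v)),
          (S ⊆ B ∧ idx B = i) ↔ (S ⊆ B ∧ (B ∩ S₀).card = (i : ℕ)) := by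
        intro B hB
        have hle : (B ∩ S₀).card ≤ s := by
          calc (B ∩ S₀).card ≤ S₀.card := Finset.card_le_card Finset.inter_subset_right
            _ = s := hS₀
        constructor
        · rintro ⟨h1, h2⟩
          refine ⟨h1, ?_⟩
          have := congrArg (Fin.val) h2
          simp only [hidx] at this
          omega
        · rintro ⟨h1, h2⟩
          refine ⟨h1, ?_⟩
          simp only [hidx]
          apply Fin.ext
          simp only []
          omega
      rw [Finset.filter_congr hfil]
      have hconst : ∀ B ∈ (Finset.powersetCard k (Finset.univ : Finset (Fin v))).filter
          (fun B => S ⊆ B ∧ (B ∩ S₀).card = (i : ℕ)), c (idx B) = c i := by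
        intro B hB
        rw [Finset.mem_filter] at hB
        obtain ⟨hB1, -, hB2⟩ := hB
        have hle : (B ∩ S₀).card ≤ s := by
          calc (B ∩ S₀).card ≤ S₀.card := Finset.card_le_card Finset.inter_subset_right
            _ = s := hS₀
        congr 1
        simp only [hidx]
        apply Fin.ext
        simp only []
        omega
      rw [Finset.sum_congr rfl hconst, Finset.sum_const, nsmul_eq_mul]
      congr 1
      by_cases hcase : (jf : ℕ) ≤ (i : ℕ) ∧ s + (i : ℕ) ≤ k + (jf : ℕ)
      · rw [count_lemma S S₀ s k (i : ℕ) ((S ∩ S₀).card) hScard hS₀ rfl hcase.1 hcase.2]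
        simp only [hM, hjf, Fintype.card_fin]
        rw [if_pos hcase]

      · have : (Finset.powersetCard k (Finset.univ : Finset (Fin v))).filter
            (fun B => S ⊆ B ∧ (B ∩ S₀).card = (i : ℕ)) = ∅ := by
          rw [Finset.filter_eq_empty_iff]
          intro B hB
          rw [Finset.mem_powersetCard] at hB
          rintro ⟨h1, h2⟩
          apply hcase
          have hss : S ∩ S₀ ⊆ B ∩ S₀ := Finset.inter_subset_inter h1 le_rfl
          have h3 : (S ∩ S₀).card ≤ (B ∩ S₀).card := Finset.card_le_card hss
          have h4 := Finset.card_union_add_card_inter S (B ∩ S₀)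
          have h5 : S ∩ (B ∩ S₀) = S ∩ S₀ := by
            ext x; simp only [Finset.mem_inter]
            exact ⟨fun ⟨a, _, b⟩ => ⟨a, b⟩, fun ⟨a, b⟩ => ⟨a, h1 a, b⟩⟩
          have h6 : (S ∪ B ∩ S₀).card ≤ k := by
            rw [← hB.2]
            exact Finset.card_le_card (Finset.union_subset h1 Finset.inter_subset_left)
          rw [h5, hScard, h2] at h4
          have hjval : (jf : ℕ) = (S ∩ S₀).card := rfl
          constructor <;> omega
        rw [this]
        simp only [Finset.card_empty, Nat.cast_zero, zero_mul, hM]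
        rw [if_neg (show ¬((#(S ∩ S₀) : ℕ) ≤ (i : ℕ) ∧ s + (i : ℕ) ≤ k + #(S ∩ S₀))
          from hcase)]
    rw [Finset.sum_congr rfl (fun i _ => step2 i)]
    have : ∑ i : Fin (s+1), M jf i * c i = M.mulVec c jf := rfl
    rw [this, hMc, he]
    simp only [hjf]
    by_cases hSS : S = S₀
    · rw [if_pos hSS, if_pos]
      simp [hSS, Finset.inter_self, hS₀]
    · rw [if_neg hSS, if_neg]
      intro hcontra
      apply hSS
      have h1 : S ∩ S₀ = S := Finset.eq_of_subset_of_card_le Finset.inter_subset_left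
        (by omega)
      have h2 : S ⊆ S₀ := h1 ▸ Finset.inter_subset_right
      exact Finset.eq_of_subset_of_card_le h2 (by omega)
  -- now conclude
  have main : ∑ B ∈ Finset.powersetCard k (Finset.univ : Finset (Fin v)),
      c (idx B) * ∑ S ∈ Finset.powersetCard s (Finset.univ : Finset (Fin v)),
        lam S * (if S ⊆ B then 1 else 0) = 0 := by
    apply Finset.sum_eq_zero
    intro B hB
    rw [Finset.mem_powersetCard] at hB
    rw [h B hB.2, mul_zero]
  simp only [Finset.mul_sum] at main
  rw [Finset.sum_comm] at main
  have main2 : ∑ S ∈ Finset.powersetCard s (Finset.univ : Finset (Fin v)),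
      lam S * (if S = S₀ then 1 else 0) = 0 := by
    calc ∑ S ∈ Finset.powersetCard s (Finset.univ : Finset (Fin v)),
          lam S * (if S = S₀ then 1 else 0)
        = ∑ S ∈ Finset.powersetCard s (Finset.univ : Finset (Fin v)),
            ∑ B ∈ Finset.powersetCard k (Finset.univ : Finset (Fin v)),
              c (idx B) * (lam S * (if S ⊆ B then 1 else 0)) := by
          refine Finset.sum_congr rfl fun S hS => ?_
          rw [← key S hS, Finset.mul_sum]
          exact Finset.sum_congr rfl fun B _ => by ring
      _ = 0 := main
  rw [Finset.sum_eq_single S₀] at main2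
  · rw [if_pos rfl, mul_one] at main2
    exact main2
  · intro S _ hSne
    rw [if_neg hSne, mul_zero]
  · intro hmem
    exact absurd (Finset.mem_powersetCard_univ.mpr (by simp [hS₀]) : S₀ ∈ _) hmem

open MvPolynomial in
/-- if `s` is the smallest positive integer with `C(v,s) > |ℬ|`,
and `s ≤ k`, `s ≤ v - k`, then `γ₁(ℬ) ≤ s`. -/
theorem gamma1_upper_bound (v k t lam s : ℕ) (hlam : 1 ≤ lam)
    (ℬ : Finset (Finset (Fin v))) (hdes : IsDesign ℬ k t lam) (hne : ℬ.Nonempty)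
    (hnc : ℬ ≠ Finset.powersetCard k (Finset.univ : Finset (Fin v)))
    (hs1 : 1 ≤ s) (hs2 : ℬ.card < v.choose s)
    (hmin : ∀ r : ℕ, 1 ≤ r → ℬ.card < v.choose r → s ≤ r)
    (hsk : s ≤ k) (hsv : s ≤ v - k) :
    gamma1 k ℬ ≤ s := by
  classical
  obtain ⟨B₁, hB₁⟩ := hne
  have hBk : B₁.card = k := hdes.1 B₁ hB₁
  have hkv : k ≤ v := by
    rw [← hBk]
    calc B₁.card ≤ (Finset.univ : Finset (Fin v)).card :=
          Finset.card_le_card (Finset.subset_univ _)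
      _ = v := by simp
  have hskv : s + k ≤ v := by omega
  set SS := Finset.powersetCard s (Finset.univ : Finset (Fin v)) with hSS
  -- the evaluation matrix
  set A : Matrix {B // B ∈ ℬ} {S // S ∈ SS} ℂ :=
    fun B S => if (S : Finset (Fin v)) ⊆ (B : Finset (Fin v)) then 1 else 0 with hA
  have hnotinj : ¬ Function.Injective A.mulVecLin := by
    intro hinj
    have hle := LinearMap.finrank_le_finrank_of_injective hinj
    rw [Module.finrank_fintype_fun_eq_card, Module.finrank_fintype_fun_eq_card,
      Fintype.card_coe, Fintype.card_coe] at hle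
    rw [hSS, Finset.card_powersetCard, Finset.card_univ, Fintype.card_fin] at hle
    omega
  have hker : LinearMap.ker A.mulVecLin ≠ ⊥ := by
    rw [Ne, LinearMap.ker_eq_bot]
    exact hnotinj
  obtain ⟨l, hl0, hlne⟩ := Submodule.exists_mem_ne_zero_of_ne_bot hker
  rw [LinearMap.mem_ker] at hl0
  -- coefficients
  set lc : Finset (Fin v) → ℂ := fun S => if h : S ∈ SS then l ⟨S, h⟩ else 0 with hlc
  set f : MvPolynomial (Fin v) ℂ :=
    ∑ S ∈ SS, MvPolynomial.C (lc S) * ∏ i ∈ S, MvPolynomial.X i with hf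
  have heval : ∀ B : Finset (Fin v),
      MvPolynomial.eval (charVec B) f
        = ∑ S ∈ SS, lc S * (if S ⊆ B then 1 else 0) := by
    intro B
    rw [hf, map_sum]
    refine Finset.sum_congr rfl fun S hS => ?_
    rw [map_mul, eval_C, map_prod]
    congr 1
    simp only [eval_X, charVec]
    rw [Finset.prod_boole]
    simp [Finset.subset_iff]
  -- f is in the design ideal
  have hfI : f ∈ designIdeal ℬ := by
    simp only [designIdeal, Ideal.mem_iInf]
    intro B hB
    rw [RingHom.mem_ker, heval B]
    have h1 : ∑ S ∈ SS, lc S * (if S ⊆ B then 1 else 0)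
        = ∑ S : {S // S ∈ SS}, lc S * (if (S : Finset (Fin v)) ⊆ B then 1 else 0) :=
      (Finset.sum_coe_sort SS _).symm
    rw [h1]
    have h2 : ∀ S : {S // S ∈ SS},
        lc S * (if (S : Finset (Fin v)) ⊆ B then 1 else 0)
          = A ⟨B, hB⟩ S * l S := by
      intro S
      rw [hlc, hA]
      simp only [dif_pos S.2]
      ring
    rw [Finset.sum_congr rfl fun S _ => h2 S]
    have := congrFun hl0 ⟨B, hB⟩
    rwa [Matrix.mulVecLin_apply, Matrix.mulVec, dotProduct] at this
  -- degree bound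
  have hdeg : f.totalDegree ≤ s := by
    rw [hf]
    refine (MvPolynomial.totalDegree_finset_sum _ _).trans (Finset.sup_le fun S hS => ?_)
    calc (MvPolynomial.C (lc S) * ∏ i ∈ S, MvPolynomial.X i).totalDegree
        ≤ (MvPolynomial.C (lc S) : MvPolynomial (Fin v) ℂ).totalDegree
            + (∏ i ∈ S, (MvPolynomial.X i : MvPolynomial (Fin v) ℂ)).totalDegree :=
          MvPolynomial.totalDegree_mul _ _
      _ ≤ 0 + ∑ i ∈ S, (MvPolynomial.X i : MvPolynomial (Fin v) ℂ).totalDegree := by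
          rw [MvPolynomial.totalDegree_C]
          exact Nat.add_le_add_left (MvPolynomial.totalDegree_finset_prod S _) 0
      _ = S.card := by simp [MvPolynomial.totalDegree_X]
      _ = s := (Finset.mem_powersetCard.mp hS).2
  -- trivial ideal vanishes on all k-sets
  have hTvan : ∀ B : Finset (Fin v), B.card = k →
      ∀ g ∈ trivialIdeal (Fin v) k, MvPolynomial.eval (charVec B) g = 0 := by
    intro B hB g hg
    have hle : trivialIdeal (Fin v) k ≤ RingHom.ker (MvPolynomial.eval (charVec B)) := by
      rw [trivialIdeal, Ideal.span_le]
      rintro g (rfl | ⟨i, rfl⟩)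
      · rw [SetLike.mem_coe, RingHom.mem_ker, map_sub, map_sum, eval_C]
        have : ∑ i : Fin v, MvPolynomial.eval (charVec B) (MvPolynomial.X i)
            = (B.card : ℂ) := by
          simp only [eval_X, charVec]
          rw [Finset.sum_boole]
          congr 1
          rw [Finset.filter_univ_mem]
        rw [this, hB, sub_self]
      · rw [SetLike.mem_coe, RingHom.mem_ker, map_sub, map_pow, eval_X]
        simp only [charVec]
        split <;> ring
    exact hle hg
  -- f is not in the trivial ideal
  have hfT : f ∉ trivialIdeal (Fin v) k := by
    intro hmem
    apply hlne
    have hvan : ∀ B : Finset (Fin v), B.card = k →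
        ∑ S ∈ SS, lc S * (if S ⊆ B then 1 else 0) = 0 := by
      intro B hB
      rw [← heval B]
      exact hTvan B hB f hmem
    have hzero : ∀ S₀ : Finset (Fin v), S₀.card = s → lc S₀ = 0 :=
      gottlieb hsk hskv lc hvan
    funext S
    have hScard : (S : Finset (Fin v)).card = s := (Finset.mem_powersetCard.mp S.2).2
    have := hzero S hScard
    rw [hlc] at this
    simpa [dif_pos S.2] using this
  exact le_trans (Nat.sInf_le ⟨f, hfI, hfT, rfl⟩) hdeg
end
end

section
/- Let v ≥ k ≥ 0 and let G ⊆ ℂ[x_1,…,x_v] be any set of polynomials containing G_0 = {x_1+⋯+x_v − k} ∪ {x_i² − x_i : 1 ≤ i ≤ v}. Then the ideal ⟨G⟩ generated by G is a radical ideal. -/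
noncomputable section

variable {σ : Type*}

open MvPolynomial Finset in
/-- Any ideal containing all the boolean relations `X i ^ 2 - X i` is radical. -/
theorem boolean_ideal_isRadical {v : ℕ} (J : Ideal (MvPolynomial (Fin v) ℂ))
    (hX : ∀ i : Fin v, X i ^ 2 - X i ∈ J) : J.IsRadical := by
  set P := MvPolynomial (Fin v) ℂ
  -- the idempotent-like polynomials
  set E : Finset (Fin v) → P := fun S => (∏ i ∈ S, X i) * ∏ i ∈ univ \ S, (1 - X i) with hE
  set pt : Finset (Fin v) → Fin v → ℂ := fun S i => if i ∈ S then 1 else 0 with hpt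
  have sumE : ∑ S ∈ (univ : Finset (Fin v)).powerset, E S = 1 := by
    have h := Finset.prod_add (fun i : Fin v => (X i : P)) (fun i => 1 - X i) univ
    simp only [add_sub_cancel, Finset.prod_const_one] at h
    exact h.symm
  have keyX : ∀ (S : Finset (Fin v)) (i : Fin v),
      X i * E S - C (pt S i) * E S ∈ J := by
    intro S i
    by_cases hi : i ∈ S
    · have hfac : E S = X i * ((∏ j ∈ S.erase i, X j) * ∏ j ∈ univ \ S, (1 - X j)) := by
        simp only [hE]; rw [← Finset.mul_prod_erase S _ hi]; ring
      have : X i * E S - C (pt S i) * E S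
          = (X i ^ 2 - X i) * ((∏ j ∈ S.erase i, X j) * ∏ j ∈ univ \ S, (1 - X j)) := by
        rw [hfac]; simp [hpt, hi]; ring
      rw [this]
      exact Ideal.mul_mem_right _ _ (hX i)
    · have hi' : i ∈ univ \ S := by simp [hi]
      have hfac : E S = (1 - X i) * ((∏ j ∈ S, X j) * ∏ j ∈ (univ \ S).erase i, (1 - X j)) := by
        simp only [hE]; rw [← Finset.mul_prod_erase (univ \ S) _ hi']; ring
      have : X i * E S - C (pt S i) * E S
          = -((X i ^ 2 - X i) * ((∏ j ∈ S, X j) * ∏ j ∈ (univ \ S).erase i, (1 - X j))) := by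
        rw [hfac]; simp [hpt, hi]; ring
      rw [this]
      exact neg_mem (Ideal.mul_mem_right _ _ (hX i))
  have key : ∀ (S : Finset (Fin v)) (f : P),
      f * E S - C (eval (pt S) f) * E S ∈ J := by
    intro S f
    induction f using MvPolynomial.induction_on with
    | C a => simp
    | add f g hf hg =>
        have : (f + g) * E S - C (eval (pt S) (f + g)) * E S
            = (f * E S - C (eval (pt S) f) * E S) + (g * E S - C (eval (pt S) g) * E S) := by
          simp [map_add]; ring
        rw [this]; exact add_mem hf hg
    | mul_X f i hf =>
        have : (f * X i) * E S - C (eval (pt S) (f * X i)) * E S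
            = f * (X i * E S - C (pt S i) * E S)
              + C (pt S i) * (f * E S - C (eval (pt S) f) * E S) := by
          simp [map_mul]; ring
        rw [this]
        exact add_mem (Ideal.mul_mem_left _ _ (keyX S i)) (Ideal.mul_mem_left _ _ hf)
  -- now prove radicality
  rintro f ⟨n, hfn⟩
  rcases Nat.eq_zero_or_pos n with hn | hn
  · subst hn
    simp only [pow_zero] at hfn
    exact J.eq_top_iff_one.mpr hfn ▸ Submodule.mem_top
  have hterm : ∀ S ∈ (univ : Finset (Fin v)).powerset, C (eval (pt S) f) * E S ∈ J := by
    intro S _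
    by_cases hc : eval (pt S) f = 0
    · simp [hc]
    · -- from f^n ∈ J: (eval pt f)^n * E S ∈ J, so E S ∈ J
      have h1 : C (eval (pt S) (f ^ n)) * E S ∈ J := by
        have h2 := key S (f ^ n)
        have h3 : f ^ n * E S ∈ J := Ideal.mul_mem_right _ _ hfn
        have := J.sub_mem h3 h2
        simpa using this
      have hES : E S ∈ J := by
        have h4 : C ((eval (pt S) f ^ n)⁻¹) * (C (eval (pt S) (f ^ n)) * E S) ∈ J :=
          Ideal.mul_mem_left _ _ h1
        have h5 : C ((eval (pt S) f ^ n)⁻¹) * (C (eval (pt S) (f ^ n)) * E S) = E S := by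
          rw [map_pow, ← mul_assoc, ← map_mul, inv_mul_cancel₀ (pow_ne_zero n hc)]
          simp
        rwa [h5] at h4
      exact Ideal.mul_mem_left _ _ hES
  have hdecomp : f - ∑ S ∈ (univ : Finset (Fin v)).powerset, C (eval (pt S) f) * E S ∈ J := by
    have : f - ∑ S ∈ (univ : Finset (Fin v)).powerset, C (eval (pt S) f) * E S
        = ∑ S ∈ (univ : Finset (Fin v)).powerset, (f * E S - C (eval (pt S) f) * E S) := by
      rw [Finset.sum_sub_distrib, ← Finset.mul_sum, sumE, mul_one]
    rw [this]
    exact Ideal.sum_mem _ fun S hS => key S f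
  have := J.add_mem hdecomp (Ideal.sum_mem _ hterm)
  simpa using this


/-- any ideal generated by a set of polynomials containing `G₀`
is a radical ideal. -/
theorem span_containing_G0_isRadical (v k : ℕ) (hkv : k ≤ v)
    (G : Set (MvPolynomial (Fin v) ℂ)) (hG : G0 (Fin v) k ⊆ G) :
    (Ideal.span G).IsRadical := by
  apply boolean_ideal_isRadical
  intro i
  exact Ideal.subset_span (hG (Set.mem_insert_iff.mpr (Or.inr ⟨i, rfl⟩)))
end
end

section
/- Let 1 ≤ t ≤ k ≤ v and let I be an ideal of ℂ[x_1,…,x_v] containing the trivial ideal T. Then for every subset S ⊆ X = {1,…,v} with |S| ≤ t, the coset x^S + I in the quotient ring ℂ[x_1,…,x_v]/I lies in the ℂ-linear span of the cosets { x^T' + I : T' ⊆ X, |T'| = t }. -/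
noncomputable section

variable {σ : Type*}

/-- modulo any ideal containing the trivial ideal, the coset of `x^S`
(`|S| ≤ t`) lies in the span of the cosets of the monomials `x^{T'}` with `|T'| = t`. -/
theorem monomial_coset_in_span (v k t : ℕ) (ht : 1 ≤ t) (htk : t ≤ k) (hkv : k ≤ v)
    (I : Ideal (MvPolynomial (Fin v) ℂ)) (hI : trivialIdeal (Fin v) k ≤ I)
    (S : Finset (Fin v)) (hS : S.card ≤ t) :
    Ideal.Quotient.mk I (∏ i ∈ S, MvPolynomial.X i) ∈
      Submodule.span ℂ
        ((fun T' : Finset (Fin v) => Ideal.Quotient.mk I (∏ i ∈ T', MvPolynomial.X i)) ''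
          {T' : Finset (Fin v) | T'.card = t}) := by
  classical
  suffices H : ∀ n (S : Finset (Fin v)), S.card + n = t →
      Ideal.Quotient.mk I (∏ i ∈ S, MvPolynomial.X i) ∈
        Submodule.span ℂ
          ((fun T' : Finset (Fin v) => Ideal.Quotient.mk I (∏ i ∈ T', MvPolynomial.X i)) ''
            {T' : Finset (Fin v) | T'.card = t}) by
    exact H (t - S.card) S (by omega)
  intro n
  induction n with
  | zero =>
    intro S hcard
    exact Submodule.subset_span ⟨S, by simpa using hcard, rfl⟩
  | succ n ih =>
    intro S hcard
    set Q := Ideal.Quotient.mk I with hQdef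
    have hSk : S.card < k := by omega
    have hsq : ∀ i : Fin v, Q (MvPolynomial.X i ^ 2) = Q (MvPolynomial.X i) := by
      intro i
      refine Ideal.Quotient.eq.mpr (hI ?_)
      exact Ideal.subset_span (Set.mem_insert_iff.mpr (Or.inr ⟨i, rfl⟩))
    have hmulX : ∀ i ∈ S, Q ((∏ j ∈ S, MvPolynomial.X j) * MvPolynomial.X i)
        = Q (∏ j ∈ S, MvPolynomial.X j) := by
      intro i hi
      have h1 : (∏ j ∈ S, MvPolynomial.X j) * MvPolynomial.X i
          = MvPolynomial.X i ^ 2 * ∏ j ∈ S.erase i, (MvPolynomial.X j : MvPolynomial (Fin v) ℂ) := by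
        rw [← Finset.mul_prod_erase S (fun j => (MvPolynomial.X j : MvPolynomial (Fin v) ℂ)) hi]; ring
      rw [h1, map_mul, hsq, ← map_mul, Finset.mul_prod_erase S _ hi]
    have hsum : Q (∑ i, MvPolynomial.X i) = Q (MvPolynomial.C (k : ℂ)) := by
      refine Ideal.Quotient.eq.mpr (hI ?_)
      exact Ideal.subset_span (Set.mem_insert _ _)
    have halg : ∀ c : ℂ, ∀ x : MvPolynomial (Fin v) ℂ, Q (MvPolynomial.C c) * Q x = c • Q x := by
      intro c x
      rw [← map_mul, ← MvPolynomial.smul_eq_C_mul, hQdef, ← Ideal.Quotient.mkₐ_eq_mk ℂ I, map_smul]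
    have hkey : ((k : ℂ) - S.card) • Q (∏ j ∈ S, MvPolynomial.X j)
        = ∑ i ∈ Sᶜ, Q (∏ j ∈ insert i S, MvPolynomial.X j) := by
      have h2 : Q ((∏ j ∈ S, MvPolynomial.X j) * ∑ i, MvPolynomial.X i)
          = (k : ℂ) • Q (∏ j ∈ S, MvPolynomial.X j) := by
        rw [map_mul, hsum, mul_comm, halg]
      have h3 : Q ((∏ j ∈ S, MvPolynomial.X j) * ∑ i, MvPolynomial.X i)
          = (S.card : ℂ) • Q (∏ j ∈ S, MvPolynomial.X j)
            + ∑ i ∈ Sᶜ, Q (∏ j ∈ insert i S, MvPolynomial.X j) := by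
        rw [Finset.mul_sum, map_sum, ← Finset.sum_add_sum_compl S
          (fun i => Q ((∏ j ∈ S, MvPolynomial.X j) * MvPolynomial.X i))]
        congr 1
        · rw [Finset.sum_congr rfl hmulX, Finset.sum_const, ← Nat.cast_smul_eq_nsmul ℂ]
        · refine Finset.sum_congr rfl fun i hi => ?_
          rw [Finset.prod_insert (Finset.mem_compl.mp hi), mul_comm]
      rw [sub_smul]
      rw [h2] at h3
      linear_combination h3
    have hc : ((k : ℂ) - S.card) ≠ 0 := sub_ne_zero.mpr (by exact_mod_cast hSk.ne')
    have hrw : Q (∏ j ∈ S, MvPolynomial.X j)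
        = ((k : ℂ) - S.card)⁻¹ • ∑ i ∈ Sᶜ, Q (∏ j ∈ insert i S, MvPolynomial.X j) := by
      rw [← hkey, smul_smul, inv_mul_cancel₀ hc, one_smul]
    rw [hrw]
    refine Submodule.smul_mem _ _ (Submodule.sum_mem _ fun i hi => ?_)
    exact ih (insert i S) (by rw [Finset.card_insert_of_notMem (Finset.mem_compl.mp hi)]; omega)
end
end

section
/- Let s ≥ 1, λ ≥ 1, and suppose 2s ≤ k and v ≥ k + s. If ℬ is a 2s-(v,k,λ) design on X = {1,…,v}, then |ℬ| ≥ C(v,s). -/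
noncomputable section

variable {σ : Type*}

open Finset

lemma card_between {α : Type*} [DecidableEq α] (P B : Finset α) (n : ℕ) (hPB : P ⊆ B)
    (hn : P.card ≤ n) :
    ((B.powersetCard n).filter (fun T => P ⊆ T)).card = (B.card - P.card).choose (n - P.card) := by
  rw [← Finset.card_sdiff_of_subset hPB, ← Finset.card_powersetCard (n - P.card) (B \ P)]
  apply Finset.card_nbij' (fun T => T \ P) (fun R => R ∪ P)
  · intro T hT
    simp only [mem_coe, mem_filter, mem_powersetCard] at hT
    obtain ⟨⟨hTB, hTc⟩, hPT⟩ := hT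
    rw [mem_coe, mem_powersetCard]
    exact ⟨sdiff_subset_sdiff hTB (le_refl P), by rw [card_sdiff_of_subset hPT, hTc]⟩
  · intro R hR
    rw [mem_coe, mem_powersetCard] at hR
    obtain ⟨hRs, hRc⟩ := hR
    have hdisj : Disjoint R P := (sdiff_disjoint.mono_left hRs)
    simp only [mem_coe, mem_filter, mem_powersetCard]
    refine ⟨⟨union_subset (hRs.trans sdiff_subset) hPB, ?_⟩, subset_union_right⟩
    rw [card_union_of_disjoint hdisj, hRc]
    omega
  · intro T hT
    simp only [mem_coe, mem_filter, mem_powersetCard] at hT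
    exact sdiff_union_of_subset hT.2
  · intro R hR
    rw [mem_coe, mem_powersetCard] at hR
    have hdisj : Disjoint R P := (sdiff_disjoint.mono_left hR.1)
    beta_reduce
    rw [union_sdiff_right, sdiff_eq_self_of_disjoint hdisj]

/-- number of blocks containing `P` and avoiding `Q` -/
def cnt {v : ℕ} (ℬ : Finset (Finset (Fin v))) (P Q : Finset (Fin v)) : ℕ :=
  (ℬ.filter fun B => P ⊆ B ∧ Disjoint Q B).card

section Design

variable {v k s lam : ℕ} {ℬ : Finset (Finset (Fin v))}
  (hdes : IsDesign ℬ k (2 * s) lam) (hlam : 1 ≤ lam) (hsk : 2 * s ≤ k) (hkv : k + s ≤ v)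

include hdes hsk in
lemma cnt_empty_mul (P : Finset (Fin v)) (hP : P.card ≤ 2 * s) :
    cnt ℬ P ∅ * (k - P.card).choose (2 * s - P.card)
      = lam * (v - P.card).choose (2 * s - P.card) := by
  classical
  have h1 : ∀ B : Finset (Fin v),
      (((univ : Finset (Fin v)).powersetCard (2 * s)).filter
          (fun T => P ⊆ T ∧ T ⊆ B)).card
        = ((B.powersetCard (2 * s)).filter (fun T => P ⊆ T)).card := by
    intro B
    congr 1
    ext T
    simp only [mem_filter, mem_powersetCard, subset_univ, true_and]
    tauto
  have hE : ∑ B ∈ ℬ, ∑ T ∈ (univ : Finset (Fin v)).powersetCard (2 * s),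
        (if P ⊆ T ∧ T ⊆ B then 1 else 0)
      = cnt ℬ P ∅ * (k - P.card).choose (2 * s - P.card) := by
    have : ∀ B ∈ ℬ, ∑ T ∈ (univ : Finset (Fin v)).powersetCard (2 * s),
        (if P ⊆ T ∧ T ⊆ B then 1 else 0)
          = if P ⊆ B then (k - P.card).choose (2 * s - P.card) else 0 := by
      intro B hB
      rw [← Finset.card_filter, h1]
      by_cases hPB : P ⊆ B
      · rw [if_pos hPB, card_between P B _ hPB hP, hdes.1 B hB]
      · rw [if_neg hPB, Finset.card_eq_zero, Finset.filter_eq_empty_iff]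
        intro T hT
        rw [mem_powersetCard] at hT
        intro hPT
        exact hPB (hPT.trans hT.1)
    rw [Finset.sum_congr rfl this, ← Finset.sum_filter, Finset.sum_const, smul_eq_mul]
    congr 1
    simp [cnt]
  have hE2 : ∑ B ∈ ℬ, ∑ T ∈ (univ : Finset (Fin v)).powersetCard (2 * s),
        (if P ⊆ T ∧ T ⊆ B then 1 else 0)
      = lam * (v - P.card).choose (2 * s - P.card) := by
    rw [Finset.sum_comm]
    have : ∀ T ∈ (univ : Finset (Fin v)).powersetCard (2 * s),
        (∑ B ∈ ℬ, if P ⊆ T ∧ T ⊆ B then 1 else 0) = if P ⊆ T then lam else 0 := by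
      intro T hT
      rw [mem_powersetCard] at hT
      by_cases hPT : P ⊆ T
      · rw [if_pos hPT]
        simp only [hPT, true_and]
        rw [← Finset.card_filter]
        exact hdes.2 T hT.2
      · simp [hPT]
    rw [Finset.sum_congr rfl this, ← Finset.sum_filter, Finset.sum_const, smul_eq_mul,
      card_between P univ _ (subset_univ P) hP, mul_comm]
    congr 2
    simp
  rw [← hE, hE2]

include hdes hsk in
lemma cnt_empty_eq (P P' : Finset (Fin v)) (hc : P.card = P'.card) (hP : P.card ≤ 2 * s) :
    cnt ℬ P ∅ = cnt ℬ P' ∅ := by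
  have h1 := cnt_empty_mul hdes hsk P hP
  have h2 := cnt_empty_mul hdes hsk P' (hc ▸ hP)
  rw [← hc] at h2
  have hpos : 0 < (k - P.card).choose (2 * s - P.card) :=
    Nat.choose_pos (by omega)
  exact Nat.eq_of_mul_eq_mul_right hpos (h1.trans h2.symm)

include hdes hlam hsk hkv in
lemma cnt_empty_pos (P : Finset (Fin v)) (hP : P.card ≤ 2 * s) : 0 < cnt ℬ P ∅ := by
  have h1 := cnt_empty_mul hdes hsk P hP
  have hpos : 0 < lam * (v - P.card).choose (2 * s - P.card) :=
    Nat.mul_pos hlam (Nat.choose_pos (by omega))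
  rcases Nat.eq_zero_or_pos (cnt ℬ P ∅) with h0 | h0
  · rw [h0, zero_mul] at h1
    omega
  · exact h0

lemma cnt_split (P Q : Finset (Fin v)) (x : Fin v) (hx : x ∉ Q) :
    cnt ℬ P Q = cnt ℬ P (insert x Q) + cnt ℬ (insert x P) Q := by
  classical
  have h := Finset.card_filter_add_card_filter_not
    (s := ℬ.filter fun B => P ⊆ B ∧ Disjoint Q B) (fun B => x ∉ B)
  rw [Finset.filter_filter, Finset.filter_filter] at h
  show (ℬ.filter fun B => P ⊆ B ∧ Disjoint Q B).card = _
  rw [← h]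
  congr 1
  · show _ = (ℬ.filter fun B => P ⊆ B ∧ Disjoint (insert x Q) B).card
    congr 1
    apply Finset.filter_congr
    intro B _
    simp only [Finset.disjoint_insert_left]
    tauto
  · show _ = (ℬ.filter fun B => insert x P ⊆ B ∧ Disjoint Q B).card
    congr 1
    apply Finset.filter_congr
    intro B _
    simp only [Finset.insert_subset_iff, not_not]
    tauto

include hdes hsk in
lemma cnt_const : ∀ (n : ℕ) (P P' Q Q' : Finset (Fin v)), Disjoint P Q → Disjoint P' Q' →
    P.card = P'.card → Q.card = n → Q'.card = n → P.card + n ≤ 2 * s →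
    cnt ℬ P Q = cnt ℬ P' Q' := by
  intro n
  induction n with
  | zero =>
    intro P P' Q Q' _ _ hpp hq hq' hle
    rw [Finset.card_eq_zero] at hq hq'
    subst hq hq'
    exact cnt_empty_eq hdes hsk P P' hpp (by omega)
  | succ n ih =>
    intro P P' Q Q' hd hd' hpp hq hq' hle
    obtain ⟨x, hx⟩ := Finset.card_pos.mp (by omega : 0 < Q.card)
    obtain ⟨x', hx'⟩ := Finset.card_pos.mp (by omega : 0 < Q'.card)
    have e1 : cnt ℬ P (Q.erase x) = cnt ℬ P Q + cnt ℬ (insert x P) (Q.erase x) := by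
      have h := cnt_split (ℬ := ℬ) P (Q.erase x) x (Finset.notMem_erase x Q)
      rwa [Finset.insert_erase hx] at h
    have e1' : cnt ℬ P' (Q'.erase x') = cnt ℬ P' Q' + cnt ℬ (insert x' P') (Q'.erase x') := by
      have h := cnt_split (ℬ := ℬ) P' (Q'.erase x') x' (Finset.notMem_erase x' Q')
      rwa [Finset.insert_erase hx'] at h
    have hxe : (Q.erase x).card = n := by rw [Finset.card_erase_of_mem hx, hq]; omega
    have hxe' : (Q'.erase x').card = n := by rw [Finset.card_erase_of_mem hx', hq']; omega
    have hxP : x ∉ P := fun h => (Finset.disjoint_left.mp hd) h hx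
    have hxP' : x' ∉ P' := fun h => (Finset.disjoint_left.mp hd') h hx'
    have i1 : cnt ℬ P (Q.erase x) = cnt ℬ P' (Q'.erase x') :=
      ih P P' _ _ (hd.mono_right (Finset.erase_subset x Q))
        (hd'.mono_right (Finset.erase_subset x' Q')) hpp hxe hxe' (by omega)
    have i2 : cnt ℬ (insert x P) (Q.erase x) = cnt ℬ (insert x' P') (Q'.erase x') := by
      apply ih
      · rw [Finset.disjoint_insert_left]
        exact ⟨Finset.notMem_erase x Q, hd.mono_right (Finset.erase_subset x Q)⟩
      · rw [Finset.disjoint_insert_left]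
        exact ⟨Finset.notMem_erase x' Q', hd'.mono_right (Finset.erase_subset x' Q')⟩
      · rw [Finset.card_insert_of_notMem hxP, Finset.card_insert_of_notMem hxP', hpp]
      · exact hxe
      · exact hxe'
      · rw [Finset.card_insert_of_notMem hxP]; omega
    omega

include hdes hlam hsk hkv in
lemma cnt_s_pos (P Q : Finset (Fin v)) (hd : Disjoint P Q) (hP : P.card = s)
    (hQ : Q.card = s) : 0 < cnt ℬ P Q := by
  classical
  set pc := ((univ : Finset (Fin v)) \ P).powersetCard s with hpc
  have hA : ∑ Q' ∈ pc, cnt ℬ P Q' = (v - s).choose s * cnt ℬ P Q := by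
    have hcg : ∀ Q' ∈ pc, cnt ℬ P Q' = cnt ℬ P Q := by
      intro Q' hQ'
      rw [hpc, mem_powersetCard] at hQ'
      refine cnt_const hdes hsk s P P Q' Q ?_ hd rfl hQ'.2 hQ (by omega)
      exact ((sdiff_disjoint (s := P)).mono_left hQ'.1).symm
    rw [Finset.sum_congr rfl hcg, Finset.sum_const, smul_eq_mul]
    congr 1
    rw [hpc, Finset.card_powersetCard, card_sdiff_of_subset (subset_univ P), card_univ,
      Fintype.card_fin, hP]
  have hswap : ∑ Q' ∈ pc, (ℬ.filter fun B => P ⊆ B ∧ Disjoint Q' B).card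
      = ∑ B ∈ ℬ, (pc.filter fun Q' => P ⊆ B ∧ Disjoint Q' B).card := by
    simp_rw [Finset.card_filter]
    exact Finset.sum_comm
  have hB : ∑ Q' ∈ pc, cnt ℬ P Q' = cnt ℬ P ∅ * (v - k).choose s := by
    show ∑ Q' ∈ pc, (ℬ.filter fun B => P ⊆ B ∧ Disjoint Q' B).card = _
    rw [hswap]
    have hinner : ∀ B ∈ ℬ, (pc.filter fun Q' => P ⊆ B ∧ Disjoint Q' B).card
        = if P ⊆ B then (v - k).choose s else 0 := by
      intro B hB
      by_cases hPB : P ⊆ B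
      · rw [if_pos hPB]
        have hfe : pc.filter (fun Q' => P ⊆ B ∧ Disjoint Q' B)
            = ((univ : Finset (Fin v)) \ B).powersetCard s := by
          ext Q'
          simp only [hpc, mem_filter, mem_powersetCard, Finset.subset_sdiff, subset_univ,
            true_and, hPB]
          exact ⟨fun h => ⟨h.2, h.1.2⟩, fun h => ⟨⟨h.1.mono_right hPB, h.2⟩, h.1⟩⟩
        rw [hfe, Finset.card_powersetCard, card_sdiff_of_subset (subset_univ B), card_univ,
          Fintype.card_fin, hdes.1 B hB]
      · rw [if_neg hPB, Finset.card_eq_zero, Finset.filter_eq_empty_iff]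
        intro Q' _ h
        exact hPB h.1
    rw [Finset.sum_congr rfl hinner, ← Finset.sum_filter, Finset.sum_const, smul_eq_mul]
    congr 1
    simp [cnt]
  have heq : (v - s).choose s * cnt ℬ P Q = cnt ℬ P ∅ * (v - k).choose s := by
    rw [← hA, hB]
  have hpos : 0 < cnt ℬ P ∅ * (v - k).choose s :=
    Nat.mul_pos (cnt_empty_pos hdes hlam hsk hkv P (by omega)) (Nat.choose_pos (by omega))
  rw [← heq] at hpos
  rcases Nat.eq_zero_or_pos (cnt ℬ P Q) with h0 | h0
  · rw [h0, Nat.mul_zero] at hpos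
    omega
  · exact h0

lemma card_filter_val_lt (v m : ℕ) (h : m ≤ v) :
    ((univ : Finset (Fin v)).filter (fun i : Fin v => (i : ℕ) < m)).card = m := by
  conv_rhs => rw [← Finset.card_range m]
  exact Finset.card_bij' (fun (i : Fin v) _ => (i : ℕ))
    (fun x hx => ⟨x, lt_of_lt_of_le (Finset.mem_range.mp hx) h⟩)
    (fun a ha => Finset.mem_range.mpr (Finset.mem_filter.mp ha).2)
    (fun x hx => Finset.mem_filter.mpr ⟨Finset.mem_univ _, Finset.mem_range.mp hx⟩)
    (fun a _ => rfl) (fun x _ => rfl)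

lemma card_filter_val_ico (v a b : ℕ) (h : b ≤ v) :
    ((univ : Finset (Fin v)).filter (fun i : Fin v => a ≤ (i : ℕ) ∧ (i : ℕ) < b)).card = b - a := by
  conv_rhs => rw [← Nat.card_Ico a b]
  exact Finset.card_bij' (fun (i : Fin v) _ => (i : ℕ))
    (fun x hx => ⟨x, lt_of_lt_of_le (Finset.mem_Ico.mp hx).2 h⟩)
    (fun a ha => Finset.mem_Ico.mpr (Finset.mem_filter.mp ha).2)
    (fun x hx => Finset.mem_filter.mpr ⟨Finset.mem_univ _, Finset.mem_Ico.mp hx⟩)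
    (fun a _ => rfl) (fun x _ => rfl)

/-- canonical `(2s-j)`-set -/
def Pc (v s j : ℕ) : Finset (Fin v) := (univ : Finset (Fin v)).filter (fun i : Fin v => (i : ℕ) < 2 * s - j)

/-- canonical `j`-set disjoint from `Pc v s j` -/
def Qc (v s j : ℕ) : Finset (Fin v) :=
  (univ : Finset (Fin v)).filter (fun i : Fin v => 2 * s - j ≤ (i : ℕ) ∧ (i : ℕ) < 2 * s)

/-- the constant `b_j` : number of blocks containing `Pc` and avoiding `Qc` -/
def bb (v s : ℕ) (ℬ : Finset (Finset (Fin v))) (j : ℕ) : ℕ := cnt ℬ (Pc v s j) (Qc v s j)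

lemma Pc_card (v s j : ℕ) (h : 2 * s ≤ v) : (Pc v s j).card = 2 * s - j := by
  rw [Pc, card_filter_val_lt v (2 * s - j) (by omega)]

lemma Qc_card (v s j : ℕ) (h : 2 * s ≤ v) (hj : j ≤ 2 * s) : (Qc v s j).card = j := by
  rw [Qc, card_filter_val_ico v _ _ h]
  omega

lemma Pc_disj_Qc (v s j : ℕ) : Disjoint (Pc v s j) (Qc v s j) := by
  rw [Finset.disjoint_left]
  intro i hi hi'
  simp only [Pc, Qc, mem_filter] at hi hi'
  omega

include hdes hsk hkv in
lemma cnt_union (S T : Finset (Fin v)) (hS : S.card = s) (hT : T.card = s) :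
    cnt ℬ (S ∪ T) ∅
      = ∑ j ∈ Finset.range (s + 1), (S ∩ T).card.choose j * bb v s ℬ j := by
  classical
  set i := (S ∩ T).card with hidef
  have hvs : 2 * s ≤ v := by omega
  have hi : i ≤ s := hS ▸ Finset.card_le_card Finset.inter_subset_left
  have hU : (S ∪ T).card = 2 * s - i := by
    have := Finset.card_union_add_card_inter S T
    omega
  have hcompl : i ≤ ((univ : Finset (Fin v)) \ (S ∪ T)).card := by
    rw [card_sdiff_of_subset (subset_univ _), card_univ, Fintype.card_fin, hU]
    omega
  obtain ⟨D, hDsub, hD⟩ := Finset.exists_subset_card_eq hcompl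
  have hDdisj : Disjoint (S ∪ T) D := ((sdiff_disjoint (s := S ∪ T)).mono_left hDsub).symm
  -- partition the blocks containing `S ∪ T` according to their intersection with `D`
  have hpart : cnt ℬ (S ∪ T) ∅
      = ∑ R ∈ D.powerset,
          ((ℬ.filter fun B => (S ∪ T) ⊆ B ∧ Disjoint ∅ B).filter fun B => B ∩ D = R).card := by
    exact Finset.card_eq_sum_card_fiberwise
      (fun B _ => Finset.mem_powerset.mpr Finset.inter_subset_right)
  have hfib : ∀ R ∈ D.powerset,
      ((ℬ.filter fun B => (S ∪ T) ⊆ B ∧ Disjoint ∅ B).filter fun B => B ∩ D = R).card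
        = bb v s ℬ (i - R.card) := by
    intro R hR
    rw [Finset.mem_powerset] at hR
    have hRcard : R.card ≤ i := hD ▸ Finset.card_le_card hR
    have hfe : ((ℬ.filter fun B => (S ∪ T) ⊆ B ∧ Disjoint ∅ B).filter fun B => B ∩ D = R)
        = ℬ.filter fun B => (S ∪ T) ∪ R ⊆ B ∧ Disjoint (D \ R) B := by
      rw [Finset.filter_filter]
      apply Finset.filter_congr
      intro B _
      simp only [Finset.disjoint_empty_left, and_true, Finset.union_subset_iff]
      constructor
      · rintro ⟨hUB, hBD⟩
        refine ⟨⟨hUB, ?_⟩, ?_⟩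
        · exact hBD ▸ Finset.inter_subset_left
        · rw [Finset.disjoint_left]
          intro x hx hxB
          rw [Finset.mem_sdiff] at hx
          exact hx.2 (hBD ▸ Finset.mem_inter.mpr ⟨hxB, hx.1⟩)
      · rintro ⟨⟨hUB, hRB⟩, hdisj⟩
        refine ⟨hUB, ?_⟩
        apply Finset.Subset.antisymm
        · intro x hx
          rw [Finset.mem_inter] at hx
          by_contra hxR
          exact (Finset.disjoint_left.mp hdisj (Finset.mem_sdiff.mpr ⟨hx.2, hxR⟩)) hx.1
        · intro x hx
          exact Finset.mem_inter.mpr ⟨hRB hx, hR hx⟩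
    rw [hfe]
    have hdisjUR : Disjoint ((S ∪ T) ∪ R) (D \ R) := by
      rw [Finset.disjoint_union_left]
      exact ⟨hDdisj.mono_right sdiff_subset, sdiff_disjoint.symm⟩
    have hURcard : ((S ∪ T) ∪ R).card = 2 * s - i + R.card := by
      rw [Finset.card_union_of_disjoint (hDdisj.mono_right hR), hU]
    have hDRcard : (D \ R).card = i - R.card := by
      rw [Finset.card_sdiff_of_subset hR, hD]
    exact cnt_const hdes hsk (i - R.card) _ _ _ _ hdisjUR (Pc_disj_Qc v s _)
      (by rw [hURcard, Pc_card v s _ hvs]; omega) hDRcard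
      (Qc_card v s _ hvs (by omega)) (by rw [hURcard]; omega)
  rw [hpart, Finset.sum_congr rfl hfib, Finset.powerset_card_disjiUnion]
  erw [Finset.sum_disjiUnion]
  have hinner : ∀ j ∈ Finset.range (D.card + 1),
      ∑ R ∈ D.powersetCard j, bb v s ℬ (i - R.card) = i.choose j * bb v s ℬ (i - j) := by
    intro j _
    have : ∀ R ∈ D.powersetCard j, bb v s ℬ (i - R.card) = bb v s ℬ (i - j) := by
      intro R hR
      rw [(Finset.mem_powersetCard.mp hR).2]
    rw [Finset.sum_congr rfl this, Finset.sum_const, smul_eq_mul, Finset.card_powersetCard, hD]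
  rw [Finset.sum_congr rfl hinner, hD]
  have hrefl : ∑ j ∈ Finset.range (i + 1), i.choose j * bb v s ℬ (i - j)
      = ∑ j ∈ Finset.range (i + 1), i.choose j * bb v s ℬ j := by
    apply Finset.sum_nbij' (fun j => i - j) (fun j => i - j)
    · intro a ha
      rw [Finset.mem_range] at ha ⊢
      omega
    · intro a ha
      rw [Finset.mem_range] at ha ⊢
      omega
    · intro a ha
      rw [Finset.mem_range] at ha
      omega
    · intro a ha
      rw [Finset.mem_range] at ha
      omega
    · intro a ha
      rw [Finset.mem_range] at ha
      congr 1
      exact (Nat.choose_symm (show a ≤ i by omega)).symm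
  rw [hrefl]
  apply Finset.sum_subset
  · apply Finset.range_subset_range.mpr
    omega
  · intro j _ hj
    rw [Finset.mem_range] at hj
    have : i < j := by
      rw [Finset.mem_range] at *
      omega
    rw [Nat.choose_eq_zero_of_lt this, zero_mul]

end Design

section Main

variable {v k s lam : ℕ} {ℬ : Finset (Finset (Fin v))}

theorem rcw_main (hs : 1 ≤ s) (hlam : 1 ≤ lam)
    (hsk : 2 * s ≤ k) (hkv : k + s ≤ v)
    (hdes : IsDesign ℬ k (2 * s) lam) :
    v.choose s ≤ ℬ.card := by
  classical
  set 𝒮 := (univ : Finset (Fin v)).powersetCard s with h𝒮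
  have hScard : ∀ S : 𝒮, (S : Finset (Fin v)).card = s :=
    fun S => (Finset.mem_powersetCard.mp S.2).2
  let F : Finset (Fin v) → Finset (Fin v) → ℚ := fun J B => if J ⊆ B then 1 else 0
  have hFmul : ∀ (a b : Prop) [Decidable a] [Decidable b],
      (if a then (1:ℚ) else 0) * (if b then 1 else 0) = if a ∧ b then 1 else 0 := by
    intro a b _ _
    by_cases ha : a <;> by_cases hb : b <;> simp [ha, hb]
  have hcnt0 : ∀ U : Finset (Fin v), ∑ B ∈ ℬ, F U B = (cnt ℬ U ∅ : ℚ) := by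
    intro U
    show (∑ B ∈ ℬ, if U ⊆ B then (1:ℚ) else 0) = _
    rw [Finset.sum_boole]
    congr 2
    apply Finset.filter_congr
    intro B _
    simp
  have hchoose : ∀ (j : ℕ) (A C : Finset (Fin v)),
      (((A ∩ C).card.choose j : ℕ) : ℚ)
        = ∑ J ∈ (univ : Finset (Fin v)).powersetCard j, F J A * F J C := by
    intro j A C
    have h1 : ∀ J, F J A * F J C = if J ⊆ A ∩ C then (1:ℚ) else 0 := by
      intro J
      show (if J ⊆ A then (1:ℚ) else 0) * (if J ⊆ C then 1 else 0) = _
      rw [hFmul]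
      congr 1
      simp [Finset.subset_inter_iff]
    simp_rw [h1]
    rw [Finset.sum_boole]
    congr 1
    rw [← Finset.card_powersetCard j (A ∩ C)]
    congr 1
    ext J
    simp only [Finset.mem_filter, Finset.mem_powersetCard, subset_univ, true_and]
    tauto
  -- linear independence of the indicator vectors
  have hlin : LinearIndependent ℚ (fun (S : 𝒮) (B : ↥ℬ) => F S.1 B.1) := by
    rw [Fintype.linearIndependent_iff]
    intro g hg
    have hg' : ∀ B : ↥ℬ, ∑ S : 𝒮, g S * F S.1 B.1 = 0 := by
      intro B
      have := congrFun hg B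
      simpa [Finset.sum_apply] using this
    have hEzero : ∑ B ∈ ℬ.attach, (∑ S : 𝒮, g S * F S.1 B.1)^2 = 0 := by
      apply Finset.sum_eq_zero
      intro B _
      rw [hg' B]
      ring
    have step1 : ∑ B ∈ ℬ.attach, (∑ S : 𝒮, g S * F S.1 B.1)^2
        = ∑ S : 𝒮, ∑ T : 𝒮, g S * g T * (cnt ℬ (S.1 ∪ T.1) ∅ : ℚ) := by
      simp_rw [pow_two, Finset.sum_mul_sum]
      rw [Finset.sum_comm]
      apply Finset.sum_congr rfl
      intro S _
      rw [Finset.sum_comm]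
      apply Finset.sum_congr rfl
      intro T _
      have : ∀ B ∈ ℬ.attach, g S * F S.1 B.1 * (g T * F T.1 B.1)
          = g S * g T * (if S.1 ∪ T.1 ⊆ B.1 then (1:ℚ) else 0) := by
        intro B _
        show g S * (if S.1 ⊆ B.1 then (1:ℚ) else 0) * (g T * (if T.1 ⊆ B.1 then (1:ℚ) else 0)) = _
        by_cases h1 : S.1 ⊆ B.1 <;> by_cases h2 : T.1 ⊆ B.1 <;>
          simp [h1, h2, Finset.union_subset_iff] <;> ring
      rw [Finset.sum_congr rfl this, ← Finset.mul_sum]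
      congr 1
      rw [← hcnt0]
      exact Finset.sum_attach ℬ (fun B => if S.1 ∪ T.1 ⊆ B then (1:ℚ) else 0)
    have step2 : ∑ S : 𝒮, ∑ T : 𝒮, g S * g T * (cnt ℬ (S.1 ∪ T.1) ∅ : ℚ)
        = ∑ j ∈ Finset.range (s+1), (bb v s ℬ j : ℚ) *
            ∑ J ∈ (univ : Finset (Fin v)).powersetCard j, (∑ S : 𝒮, g S * F J S.1)^2 := by
      have hc : ∀ S T : 𝒮, (cnt ℬ (S.1 ∪ T.1) ∅ : ℚ)
          = ∑ j ∈ Finset.range (s+1),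
              (((S.1 ∩ T.1).card.choose j : ℕ) : ℚ) * (bb v s ℬ j : ℚ) := by
        intro S T
        rw [cnt_union hdes hsk hkv S.1 T.1 (hScard S) (hScard T)]
        push_cast
        rfl
      simp_rw [hc, hchoose]
      have expand : ∀ j : ℕ,
          ∑ J ∈ (univ : Finset (Fin v)).powersetCard j, (∑ S : 𝒮, g S * F J S.1)^2
            = ∑ S : 𝒮, ∑ T : 𝒮, ∑ J ∈ (univ : Finset (Fin v)).powersetCard j,
                (g S * g T) * (F J S.1 * F J T.1) := by
        intro j
        simp_rw [pow_two, Finset.sum_mul_sum]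
        rw [Finset.sum_comm]
        refine Finset.sum_congr rfl (fun S _ => ?_)
        rw [Finset.sum_comm]
        refine Finset.sum_congr rfl (fun T _ => Finset.sum_congr rfl (fun J _ => by ring))
      have sw1 : ∀ (f : 𝒮 → 𝒮 → ℕ → ℚ),
          ∑ S : 𝒮, ∑ T : 𝒮, ∑ j ∈ Finset.range (s+1), f S T j
            = ∑ j ∈ Finset.range (s+1), ∑ S : 𝒮, ∑ T : 𝒮, f S T j := by
        intro f
        calc ∑ S : 𝒮, ∑ T : 𝒮, ∑ j ∈ Finset.range (s+1), f S T j
            = ∑ S : 𝒮, ∑ j ∈ Finset.range (s+1), ∑ T : 𝒮, f S T j :=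
              Finset.sum_congr rfl (fun S _ => Finset.sum_comm)
          _ = ∑ j ∈ Finset.range (s+1), ∑ S : 𝒮, ∑ T : 𝒮, f S T j := Finset.sum_comm
      simp_rw [Finset.mul_sum]
      rw [sw1]
      refine Finset.sum_congr rfl (fun j _ => ?_)
      have hRHS : ∑ J ∈ (univ : Finset (Fin v)).powersetCard j,
            (bb v s ℬ j : ℚ) * (∑ S : 𝒮, g S * F J S.1)^2
          = ∑ S : 𝒮, ∑ T : 𝒮, g S * g T *
              ((∑ J ∈ (univ : Finset (Fin v)).powersetCard j, F J S.1 * F J T.1)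
                * (bb v s ℬ j : ℚ)) := by
        rw [← Finset.mul_sum, expand j, Finset.mul_sum]
        refine Finset.sum_congr rfl (fun S _ => ?_)
        rw [Finset.mul_sum]
        refine Finset.sum_congr rfl (fun T _ => ?_)
        rw [Finset.mul_sum]
        conv_rhs => rw [Finset.sum_mul, Finset.mul_sum]
        exact Finset.sum_congr rfl (fun J _ => by ring)
      exact hRHS.symm
    have key : ∑ j ∈ Finset.range (s+1), (bb v s ℬ j : ℚ) *
        ∑ J ∈ (univ : Finset (Fin v)).powersetCard j, (∑ S : 𝒮, g S * F J S.1)^2 = 0 := by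
      rw [← step2, ← step1, hEzero]
    have hnonneg : ∀ j ∈ Finset.range (s+1), (0:ℚ) ≤ (bb v s ℬ j : ℚ) *
        ∑ J ∈ (univ : Finset (Fin v)).powersetCard j, (∑ S : 𝒮, g S * F J S.1)^2 := by
      intro j _
      apply mul_nonneg (Nat.cast_nonneg _)
      apply Finset.sum_nonneg
      intro J _
      exact sq_nonneg _
    have hsterm : (bb v s ℬ s : ℚ) *
        ∑ J ∈ (univ : Finset (Fin v)).powersetCard s, (∑ S : 𝒮, g S * F J S.1)^2 = 0 :=
      (Finset.sum_eq_zero_iff_of_nonneg hnonneg).mp key s (Finset.self_mem_range_succ s)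
    have hbbs : 0 < bb v s ℬ s := by
      apply cnt_s_pos hdes hlam hsk hkv _ _ (Pc_disj_Qc v s s)
      · rw [Pc_card v s s (by omega)]
        omega
      · rw [Qc_card v s s (by omega) (by omega)]
    have hsum0 : ∑ J ∈ (univ : Finset (Fin v)).powersetCard s, (∑ S : 𝒮, g S * F J S.1)^2 = 0 := by
      rcases mul_eq_zero.mp hsterm with h | h
      · exfalso
        have : (bb v s ℬ s : ℚ) ≠ 0 := Nat.cast_ne_zero.mpr (Nat.pos_iff_ne_zero.mp hbbs)
        exact this h
      · exact h
    intro S₀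
    have hJ0 : ∑ S : 𝒮, g S * F S₀.1 S.1 = 0 := by
      have := (Finset.sum_eq_zero_iff_of_nonneg (fun J _ => sq_nonneg _)).mp hsum0 S₀.1 S₀.2
      exact pow_eq_zero_iff (by norm_num) |>.mp this
    rw [Finset.sum_eq_single S₀] at hJ0
    · show g S₀ = 0
      simpa [F] using hJ0
    · intro S _ hne
      have : ¬ (S₀.1 ⊆ S.1) := by
        intro hsub
        apply hne
        apply Subtype.ext
        exact (Finset.eq_of_subset_of_card_le hsub (by rw [hScard, hScard])).symm
      show g S * (if S₀.1 ⊆ S.1 then (1:ℚ) else 0) = 0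
      rw [if_neg this, mul_zero]
    · intro h
      exact absurd (Finset.mem_univ S₀) h
  -- conclude by dimension counting
  have hfin := hlin.fintype_card_le_finrank
  rw [Module.finrank_fintype_fun_eq_card, Fintype.card_coe, Fintype.card_coe,
    h𝒮, Finset.card_powersetCard, card_univ, Fintype.card_fin] at hfin
  exact hfin

end Main


/-- Ray-Chaudhuri--Wilson: a `2s`-design has at least `C(v,s)` blocks. -/
theorem ray_chaudhuri_wilson (v k s lam : ℕ) (hs : 1 ≤ s) (hlam : 1 ≤ lam)
    (hsk : 2 * s ≤ k) (hkv : k + s ≤ v)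
    (ℬ : Finset (Finset (Fin v))) (hdes : IsDesign ℬ k (2 * s) lam) :
    v.choose s ≤ ℬ.card :=
  rcw_main hs hlam hsk hkv hdes
end
end

section
/- Let s ≥ 1, λ ≥ 1, t ≥ 2s, and suppose t ≤ k and v ≥ k + s. Let ℬ be a t-(v,k,λ) design on X = {1,…,v}, and let A^(s) be the 0-1 matrix whose rows are indexed by the s-element subsets C of X, whose columns are indexed by the blocks B ∈ ℬ, and whose (C,B)-entry is 1 if C ⊆ B and 0 otherwise. Then the rank of A^(s) (over ℚ, equivalently over ℝ or ℂ) equals C(v,s). -/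
noncomputable section

variable {σ : Type*}

open Finset Matrix


/-- Number of `m`-subsets of `S` containing a fixed subset `P`. -/
lemma card_supersets_in {α : Type*} [DecidableEq α] (S P : Finset α) (m : ℕ)
    (hPS : P ⊆ S) (hPm : P.card ≤ m) :
    ((S.powersetCard m).filter (fun T => P ⊆ T)).card
      = (S.card - P.card).choose (m - P.card) := by
  rw [← card_sdiff_of_subset hPS, ← card_powersetCard (m - P.card) (S \ P)]
  · exact Finset.card_bij' (fun T _ => T \ P) (fun T' _ => T' ∪ P)
      (by
        intro T hT
        simp only [mem_filter, mem_powersetCard] at hT ⊢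
        obtain ⟨⟨hTS, hTc⟩, hPT⟩ := hT
        exact ⟨sdiff_subset_sdiff hTS (le_refl P), by rw [card_sdiff_of_subset hPT, hTc]⟩)
      (by
        intro T' hT'
        simp only [mem_filter, mem_powersetCard] at hT' ⊢
        obtain ⟨hT'S, hT'c⟩ := hT'
        have hdisj : Disjoint T' P := by
          refine disjoint_left.2 fun a ha hap => ?_
          exact (mem_sdiff.1 (hT'S ha)).2 hap
        constructor
        · exact ⟨union_subset (hT'S.trans sdiff_subset) hPS, by
            rw [card_union_of_disjoint hdisj, hT'c]; omega⟩
        · exact subset_union_right)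
      (by
        intro T hT
        simp only [mem_filter, mem_powersetCard] at hT
        exact sdiff_union_of_subset hT.2)
      (by
        intro T' hT'
        simp only [mem_powersetCard] at hT'
        refine union_sdiff_cancel_right ?_
        refine disjoint_left.2 fun a ha hap => ?_
        exact (mem_sdiff.1 (hT'.1 ha)).2 hap)


lemma design_count_subset {v k t lam : ℕ} {ℬ : Finset (Finset (Fin v))}
    (hdes : IsDesign ℬ k t lam) (P : Finset (Fin v)) (hPt : P.card ≤ t) :
    (ℬ.filter fun B => P ⊆ B).card * (k - P.card).choose (t - P.card)
      = lam * (v - P.card).choose (t - P.card) := by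
  classical
  set 𝒯 := ((univ : Finset (Fin v)).powersetCard t).filter (fun T => P ⊆ T) with h𝒯
  have hTcard : 𝒯.card = (v - P.card).choose (t - P.card) := by
    rw [h𝒯, card_supersets_in _ _ _ (subset_univ P) hPt, card_univ, Fintype.card_fin]
  have key : ∑ T ∈ 𝒯, (ℬ.filter fun B => T ⊆ B).card = lam * 𝒯.card := by
    have hlam : ∀ T ∈ 𝒯, (ℬ.filter fun B => T ⊆ B).card = lam := by
      intro T hT
      rw [h𝒯, mem_filter, mem_powersetCard] at hT
      exact hdes.2 T hT.1.2
    rw [Finset.sum_congr rfl hlam, sum_const, smul_eq_mul, mul_comm]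
  have key2 : ∑ T ∈ 𝒯, (ℬ.filter fun B => T ⊆ B).card
      = (ℬ.filter fun B => P ⊆ B).card * (k - P.card).choose (t - P.card) := by
    have swap : ∑ T ∈ 𝒯, (ℬ.filter fun B => T ⊆ B).card
        = ∑ B ∈ ℬ, (𝒯.filter fun T => T ⊆ B).card := by
      simp only [card_filter]
      exact Finset.sum_comm
    rw [swap]
    have per : ∀ B ∈ ℬ, (𝒯.filter fun T => T ⊆ B).card
        = if P ⊆ B then (k - P.card).choose (t - P.card) else 0 := by
      intro B hB
      by_cases hPB : P ⊆ B
      · rw [if_pos hPB]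
        have : (𝒯.filter fun T => T ⊆ B) = (B.powersetCard t).filter (fun T => P ⊆ T) := by
          ext T
          simp only [h𝒯, mem_filter, mem_powersetCard, subset_univ, true_and]
          tauto
        rw [this, card_supersets_in B P t hPB hPt, hdes.1 B hB]
      · rw [if_neg hPB]
        rw [card_eq_zero, filter_eq_empty_iff]
        intro T hT
        rw [h𝒯, mem_filter] at hT
        exact fun hTB => hPB (hT.2.trans hTB)
    rw [Finset.sum_congr rfl per, ← Finset.sum_filter, sum_const, smul_eq_mul]
  rw [← key2, key, hTcard, mul_comm]


lemma choose_trinomial (n a b : ℕ) (h : a + b ≤ n) :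
    n.choose a * (n - a).choose b = n.choose (a + b) * (a + b).choose a := by
  have ha : a ≤ n := by omega
  have hb : b ≤ n - a := by omega
  have hab : a + b ≤ n := h
  have haa : a ≤ a + b := by omega
  have e1 := Nat.choose_mul_factorial_mul_factorial ha
  have e2 := Nat.choose_mul_factorial_mul_factorial hb
  have e3 := Nat.choose_mul_factorial_mul_factorial hab
  have e4 := Nat.choose_mul_factorial_mul_factorial haa
  have hz1 : n - a - b = n - (a + b) := by omega
  have hz2 : a + b - a = b := by omega
  rw [hz2] at e4
  have key : n.choose a * (n - a).choose b * (a.factorial * (b.factorial * (n - (a+b)).factorial))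
      = n.choose (a + b) * (a + b).choose a * (a.factorial * (b.factorial * (n - (a+b)).factorial)) := by
    calc n.choose a * (n - a).choose b * (a.factorial * (b.factorial * (n - (a+b)).factorial))
        = (n.choose a * a.factorial) * ((n - a).choose b * b.factorial * (n - a - b).factorial) := by
          rw [hz1]; ring
      _ = (n.choose a * a.factorial) * (n - a).factorial := by rw [e2]
      _ = n.factorial := by rw [← e1]
      _ = n.choose (a+b) * (a+b).factorial * (n - (a+b)).factorial := e3.symm
      _ = n.choose (a+b) * ((a+b).choose a * a.factorial * b.factorial) * (n - (a+b)).factorial := by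
          rw [e4]
      _ = n.choose (a + b) * (a + b).choose a * (a.factorial * (b.factorial * (n - (a+b)).factorial)) := by
          ring
  exact Nat.eq_of_mul_eq_mul_right (by positivity) key


lemma count_avoid {v k t lam : ℕ} {ℬ : Finset (Finset (Fin v))}
    (hdes : IsDesign ℬ k t lam) (htk : t ≤ k) (hkv : k ≤ v) :
    ∀ (j : ℕ) (P Q : Finset (Fin v)), Disjoint P Q → Q.card = j → P.card + j ≤ t →
    (ℬ.filter fun B => P ⊆ B ∧ Disjoint B Q).card * (v - t).choose (k - t)
      = lam * (v - P.card - j).choose (k - P.card) := by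
  intro j
  induction j with
  | zero =>
    intro P Q _ hQ hPt
    rw [card_eq_zero] at hQ
    subst hQ
    simp only [disjoint_empty_right, and_true]
    have hPt' : P.card ≤ t := by omega
    have base := design_count_subset hdes P hPt'
    have tri := choose_trinomial (v - P.card) (t - P.card) (k - t) (by omega)
    have e1 : v - P.card - (t - P.card) = v - t := by omega
    have e2 : t - P.card + (k - t) = k - P.card := by omega
    rw [e1, e2] at tri
    have key : (ℬ.filter fun B => P ⊆ B).card * (v - t).choose (k - t)
          * (k - P.card).choose (t - P.card)
        = lam * (v - P.card - 0).choose (k - P.card) * (k - P.card).choose (t - P.card) := by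
      calc (ℬ.filter fun B => P ⊆ B).card * (v - t).choose (k - t) * (k - P.card).choose (t - P.card)
          = ((ℬ.filter fun B => P ⊆ B).card * (k - P.card).choose (t - P.card))
              * (v - t).choose (k - t) := by ring
        _ = lam * (v - P.card).choose (t - P.card) * (v - t).choose (k - t) := by rw [base]
        _ = lam * ((v - P.card).choose (t - P.card) * (v - t).choose (k - t)) := by ring
        _ = lam * ((v - P.card).choose (k - P.card) * (k - P.card).choose (t - P.card)) := by rw [tri]
        _ = lam * (v - P.card - 0).choose (k - P.card) * (k - P.card).choose (t - P.card) := by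
            rw [Nat.sub_zero]; ring
    exact Nat.eq_of_mul_eq_mul_right (Nat.choose_pos (by omega)) key
  | succ j ih =>
    intro P Q hPQ hQ hPt
    have hQne : Q.Nonempty := by rw [← card_pos, hQ]; omega
    obtain ⟨x, hx⟩ := hQne
    set Q' := Q.erase x with hQ'def
    have hQins : Q = insert x Q' := (insert_erase hx).symm
    have hxQ' : x ∉ Q' := notMem_erase x Q
    have hQ'c : Q'.card = j := by rw [hQ'def, card_erase_of_mem hx, hQ]; omega
    have hxP : x ∉ P := disjoint_right.1 hPQ hx
    have hPQ' : Disjoint P Q' := hPQ.mono_right (erase_subset x Q)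
    have hsplit : (ℬ.filter fun B => P ⊆ B ∧ Disjoint B Q').card
        = (ℬ.filter fun B => insert x P ⊆ B ∧ Disjoint B Q').card
          + (ℬ.filter fun B => P ⊆ B ∧ Disjoint B Q).card := by
      have h1 : ((ℬ.filter fun B => P ⊆ B ∧ Disjoint B Q').filter (fun B => x ∈ B))
          = ℬ.filter fun B => insert x P ⊆ B ∧ Disjoint B Q' := by
        rw [filter_filter]
        apply filter_congr
        intro B _
        simp only [insert_subset_iff]
        tauto
      have h2 : ((ℬ.filter fun B => P ⊆ B ∧ Disjoint B Q').filter (fun B => ¬ x ∈ B))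
          = ℬ.filter fun B => P ⊆ B ∧ Disjoint B Q := by
        rw [filter_filter]
        apply filter_congr
        intro B _
        rw [hQins]
        simp only [disjoint_insert_right]
        tauto
      rw [← h1, ← h2, card_filter_add_card_filter_not]
    have ih1 := ih P Q' hPQ' hQ'c (by omega)
    have ih2 := ih (insert x P) Q' (by rw [disjoint_insert_left]; exact ⟨hxQ', hPQ'⟩)
      hQ'c (by rw [card_insert_of_notMem hxP]; omega)
    rw [card_insert_of_notMem hxP] at ih2
    have e1 : v - (P.card + 1) - j = v - P.card - j - 1 := by omega
    have e2 : k - (P.card + 1) = k - P.card - 1 := by omega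
    rw [e1, e2] at ih2
    have hpas : (v - P.card - j).choose (k - P.card)
        = (v - P.card - j - 1).choose (k - P.card - 1)
          + (v - P.card - j - 1).choose (k - P.card) := by
      have h1 : v - P.card - j = (v - P.card - j - 1) + 1 := by omega
      have h2 : k - P.card = (k - P.card - 1) + 1 := by omega
      rw [h1, h2, Nat.choose_succ_succ]
      simp only [Nat.succ_eq_add_one]
      rw [← h1, ← h2]
    have e3 : v - P.card - (j + 1) = v - P.card - j - 1 := by omega
    rw [e3]
    have := congrArg (· * (v - t).choose (k - t)) hsplit
    simp only [add_mul] at this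
    rw [ih1, ih2, hpas, Nat.mul_add] at this
    omega


lemma nu_eq {v k s t lam : ℕ} {ℬ : Finset (Finset (Fin v))}
    (hdes : IsDesign ℬ k t lam) (hts : 2 * s ≤ t) (htk : t ≤ k) (hkv : k ≤ v)
    (C D : Finset (Fin v)) (hC : C.card = s) (hD : D.card = s) :
    (ℬ.filter fun B => C ⊆ B ∧ D ⊆ B).card * (v - t).choose (k - t)
      = ∑ j ∈ Finset.range (s + 1),
          (C ∩ D).card.choose j * (lam * (v - 2 * s).choose (k - 2 * s + j)) := by
  classical
  set i := (C ∩ D).card with hi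
  have hile : i ≤ s := by rw [hi, ← hC]; exact card_le_card inter_subset_left
  set U := C ∪ D with hU
  have hUcard : U.card = 2 * s - i := by
    have h2 := card_union_add_card_inter C D
    rw [← hU, ← hi, hC, hD] at h2
    omega
  have hfilter : (ℬ.filter fun B => C ⊆ B ∧ D ⊆ B) = ℬ.filter fun B => U ⊆ B := by
    apply filter_congr
    intro B _
    rw [hU, union_subset_iff]
  -- pick an auxiliary i-set disjoint from U
  have hcardcompl : i ≤ (univ \ U).card := by
    rw [card_sdiff_of_subset (subset_univ U), card_univ, Fintype.card_fin, hUcard]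
    omega
  obtain ⟨Q₀, hQ₀sub, hQ₀card⟩ := Finset.exists_subset_card_eq hcardcompl
  have hUQ₀ : Disjoint U Q₀ := by
    refine disjoint_right.2 fun a ha hau => ?_
    exact (mem_sdiff.1 (hQ₀sub ha)).2 hau
  -- fiberwise decomposition by B ∩ Q₀
  have hfib : (ℬ.filter fun B => U ⊆ B).card
      = ∑ R ∈ Q₀.powerset, ((ℬ.filter fun B => U ⊆ B).filter fun B => B ∩ Q₀ = R).card := by
    apply card_eq_sum_card_fiberwise
    intro B _
    exact mem_powerset.2 inter_subset_right
  have hfibeq : ∀ R ∈ Q₀.powerset,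
      ((ℬ.filter fun B => U ⊆ B).filter fun B => B ∩ Q₀ = R)
        = ℬ.filter fun B => U ∪ R ⊆ B ∧ Disjoint B (Q₀ \ R) := by
    intro R hR
    rw [mem_powerset] at hR
    rw [filter_filter]
    apply filter_congr
    intro B _
    constructor
    · rintro ⟨hUB, hBQ⟩
      refine ⟨union_subset hUB (hBQ ▸ inter_subset_left), ?_⟩
      refine disjoint_left.2 fun a haB haQR => ?_
      rw [mem_sdiff] at haQR
      exact haQR.2 (hBQ ▸ mem_inter.2 ⟨haB, haQR.1⟩)
    · rintro ⟨hURB, hdisj⟩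
      refine ⟨(subset_union_left).trans hURB, ?_⟩
      apply Finset.Subset.antisymm
      · intro a ha
        rw [mem_inter] at ha
        by_contra haR
        exact (disjoint_left.1 hdisj ha.1) (mem_sdiff.2 ⟨ha.2, haR⟩)
      · intro a ha
        exact mem_inter.2 ⟨hURB (subset_union_right ha), hR ha⟩
  -- apply count_avoid to each fiber
  have happ : ∀ R ∈ Q₀.powerset,
      (ℬ.filter fun B => U ∪ R ⊆ B ∧ Disjoint B (Q₀ \ R)).card * (v - t).choose (k - t)
        = lam * (v - 2 * s).choose (k - 2 * s + (i - R.card)) := by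
    intro R hR
    rw [mem_powerset] at hR
    have hRc : R.card ≤ i := hQ₀card ▸ card_le_card hR
    have hdisjUR : Disjoint U R := hUQ₀.mono_right hR
    have hcardUR : (U ∪ R).card = 2 * s - i + R.card := by
      rw [card_union_of_disjoint hdisjUR, hUcard]
    have hdisj2 : Disjoint (U ∪ R) (Q₀ \ R) := by
      refine disjoint_union_left.2 ⟨hUQ₀.mono_right sdiff_subset, disjoint_sdiff⟩
    have hcardQR : (Q₀ \ R).card = i - R.card := by
      rw [card_sdiff_of_subset hR, hQ₀card]
    have := count_avoid hdes htk hkv (i - R.card) (U ∪ R) (Q₀ \ R) hdisj2 hcardQR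
      (by rw [hcardUR]; omega)
    rw [this, hcardUR]
    congr 2
    · omega
    · omega
  calc (ℬ.filter fun B => C ⊆ B ∧ D ⊆ B).card * (v - t).choose (k - t)
      = ∑ R ∈ Q₀.powerset,
          ((ℬ.filter fun B => U ⊆ B).filter fun B => B ∩ Q₀ = R).card * (v - t).choose (k - t) := by
        rw [hfilter, hfib, sum_mul]
    _ = ∑ R ∈ Q₀.powerset, lam * (v - 2 * s).choose (k - 2 * s + (i - R.card)) := by
        refine Finset.sum_congr rfl fun R hR => ?_
        rw [hfibeq R hR, happ R hR]
    _ = ∑ m ∈ Finset.range (i + 1),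
          i.choose m • (lam * (v - 2 * s).choose (k - 2 * s + (i - m))) := by
        rw [← hQ₀card]
        exact Finset.sum_powerset_apply_card
          (fun m => lam * (v - 2 * s).choose (k - 2 * s + (Q₀.card - m)))
    _ = ∑ j ∈ Finset.range (i + 1),
          i.choose j * (lam * (v - 2 * s).choose (k - 2 * s + j)) := by
        rw [← Finset.sum_range_reflect
          (fun j => i.choose j * (lam * (v - 2 * s).choose (k - 2 * s + j))) (i + 1)]
        refine Finset.sum_congr rfl fun m hm => ?_
        rw [mem_range] at hm
        have hm' : m ≤ i := by omega
        have h1 : i + 1 - 1 - m = i - m := by omega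
        rw [h1, smul_eq_mul, Nat.choose_symm hm']
    _ = ∑ j ∈ Finset.range (s + 1),
          i.choose j * (lam * (v - 2 * s).choose (k - 2 * s + j)) := by
        apply Finset.sum_subset (by intro a ha; rw [mem_range] at *; omega)
        intro j _ hj
        rw [mem_range, not_lt] at hj
        have : i < j := by omega
        rw [Nat.choose_eq_zero_of_lt this, zero_mul]

/-- for a `t`-design with `t ≥ 2s`, the inclusion matrix of `s`-subsets
versus blocks has rank exactly `C(v,s)`. -/
theorem inclusion_matrix_rank (v k s t lam : ℕ) (hs : 1 ≤ s) (hlam : 1 ≤ lam)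
    (hts : 2 * s ≤ t) (htk : t ≤ k) (hkv : k + s ≤ v)
    (ℬ : Finset (Finset (Fin v))) (hdes : IsDesign ℬ k t lam) :
    (Matrix.of fun (C : {C : Finset (Fin v) // C.card = s}) (B : {B // B ∈ ℬ}) =>
      if C.1 ⊆ B.1 then (1 : ℚ) else 0).rank = v.choose s := by
  classical
  have hkv' : k ≤ v := by omega
  set A := (Matrix.of fun (C : {C : Finset (Fin v) // C.card = s}) (B : {B // B ∈ ℬ}) =>
      if C.1 ⊆ B.1 then (1 : ℚ) else 0) with hA
  -- the key injectivity statement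
  have hcore : ∀ x : {C : Finset (Fin v) // C.card = s} → ℚ,
      (∀ b : {B // B ∈ ℬ}, (∑ c, if c.1 ⊆ b.1 then x c else 0) = 0) → x = 0 := by
    intro x hx
    set y : Finset (Fin v) → ℚ := fun J => ∑ c, if J ⊆ c.1 then x c else 0 with hy
    set a : ℕ → ℚ := fun j => ((lam * (v - 2 * s).choose (k - 2 * s + j) : ℕ) : ℚ) with ha
    set ν : {C : Finset (Fin v) // C.card = s} → {C : Finset (Fin v) // C.card = s} → ℕ :=
      fun c d => (ℬ.filter fun B => c.1 ⊆ B ∧ d.1 ⊆ B).card with hν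
    -- Step E1 : expand the sum of squares
    have E1 : (∑ b : {B // B ∈ ℬ}, (∑ c, if c.1 ⊆ b.1 then x c else 0) ^ 2)
        = ∑ c, ∑ d, (x c * x d) * (ν c d : ℚ) := by
      have e11 : ∀ b : {B // B ∈ ℬ}, (∑ c, if c.1 ⊆ b.1 then x c else 0) ^ 2
          = ∑ c, ∑ d, (if c.1 ⊆ b.1 ∧ d.1 ⊆ b.1 then x c * x d else 0) := by
        intro b
        rw [sq, Finset.sum_mul_sum]
        refine Finset.sum_congr rfl fun c _ => Finset.sum_congr rfl fun d _ => ?_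
        by_cases h1 : c.1 ⊆ b.1 <;> by_cases h2 : d.1 ⊆ b.1 <;> simp [h1, h2]
      rw [Finset.sum_congr rfl fun b _ => e11 b, Finset.sum_comm]
      refine Finset.sum_congr rfl fun c _ => ?_
      rw [Finset.sum_comm]
      refine Finset.sum_congr rfl fun d _ => ?_
      have : (∑ b : {B // B ∈ ℬ}, if c.1 ⊆ b.1 ∧ d.1 ⊆ b.1 then x c * x d else 0)
          = ∑ B ∈ ℬ, (if c.1 ⊆ B ∧ d.1 ⊆ B then x c * x d else 0) := by
        rw [← Finset.sum_coe_sort ℬ (fun B => if c.1 ⊆ B ∧ d.1 ⊆ B then x c * x d else 0)]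
      rw [this, ← Finset.sum_filter, Finset.sum_const, hν, nsmul_eq_mul, mul_comm]
    -- Step E3 : choose as a sum over j-subsets
    have E3 : ∀ (c d : {C : Finset (Fin v) // C.card = s}) (j : ℕ),
        ((c.1 ∩ d.1).card.choose j : ℚ)
          = ∑ J ∈ (univ : Finset (Fin v)).powersetCard j,
              (if J ⊆ c.1 ∧ J ⊆ d.1 then (1 : ℚ) else 0) := by
      intro c d j
      have hset : ((univ : Finset (Fin v)).powersetCard j).filter (fun J => J ⊆ c.1 ∩ d.1)
          = (c.1 ∩ d.1).powersetCard j := by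
        ext J
        simp only [mem_filter, mem_powersetCard, subset_univ, true_and]
        tauto
      have : (c.1 ∩ d.1).card.choose j
          = (((univ : Finset (Fin v)).powersetCard j).filter (fun J => J ⊆ c.1 ∩ d.1)).card := by
        rw [hset, card_powersetCard]
      rw [this]
      rw [Finset.card_filter]
      push_cast
      refine Finset.sum_congr rfl fun J _ => ?_
      congr 1
      · simp [Finset.subset_inter_iff]
    -- Step E4 : quadratic form of the j-th inclusion matrix
    have E4 : ∀ j : ℕ,
        (∑ c, ∑ d, (x c * x d) * ((c.1 ∩ d.1).card.choose j : ℚ))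
          = ∑ J ∈ (univ : Finset (Fin v)).powersetCard j, (y J) ^ 2 := by
      intro j
      calc (∑ c, ∑ d, (x c * x d) * ((c.1 ∩ d.1).card.choose j : ℚ))
          = ∑ c, ∑ d, ∑ J ∈ (univ : Finset (Fin v)).powersetCard j,
              (if J ⊆ c.1 then x c else 0) * (if J ⊆ d.1 then x d else 0) := by
            refine Finset.sum_congr rfl fun c _ => Finset.sum_congr rfl fun d _ => ?_
            rw [E3 c d j, Finset.mul_sum]
            refine Finset.sum_congr rfl fun J _ => ?_
            by_cases h1 : J ⊆ c.1 <;> by_cases h2 : J ⊆ d.1 <;> simp [h1, h2]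
        _ = ∑ J ∈ (univ : Finset (Fin v)).powersetCard j, ∑ c, ∑ d,
              (if J ⊆ c.1 then x c else 0) * (if J ⊆ d.1 then x d else 0) := by
            rw [Finset.sum_congr rfl fun c (_ : c ∈ univ) => Finset.sum_comm]
            exact Finset.sum_comm
        _ = ∑ J ∈ (univ : Finset (Fin v)).powersetCard j, (y J) ^ 2 := by
            refine Finset.sum_congr rfl fun J _ => ?_
            simp only [hy, sq]
            exact (Finset.sum_mul_sum _ _ _ _).symm
    -- the master identity
    have key : ∑ j ∈ Finset.range (s + 1),
        a j * (∑ J ∈ (univ : Finset (Fin v)).powersetCard j, (y J) ^ 2) = 0 := by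
      have lhs0 : (∑ b : {B // B ∈ ℬ}, (∑ c, if c.1 ⊆ b.1 then x c else 0) ^ 2)
          * ((v - t).choose (k - t) : ℚ) = 0 := by
        rw [Finset.sum_congr rfl fun b _ => by rw [hx b]]
        simp
      rw [E1, Finset.sum_mul] at lhs0
      have mid : ∀ c d : {C : Finset (Fin v) // C.card = s},
          ((ν c d : ℚ)) * ((v - t).choose (k - t) : ℚ)
            = ∑ j ∈ Finset.range (s + 1), ((c.1 ∩ d.1).card.choose j : ℚ) * a j := by
        intro c d
        have h0 := nu_eq hdes hts htk hkv' c.1 d.1 c.2 d.2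
        calc ((ν c d : ℚ)) * ((v - t).choose (k - t) : ℚ)
            = ((ν c d * (v - t).choose (k - t) : ℕ) : ℚ) := by push_cast; ring
          _ = ((∑ j ∈ Finset.range (s + 1),
                (c.1 ∩ d.1).card.choose j * (lam * (v - 2 * s).choose (k - 2 * s + j)) : ℕ) : ℚ) := by
              simp only [hν]; exact_mod_cast congrArg (fun n : ℕ => (n : ℚ)) h0
          _ = ∑ j ∈ Finset.range (s + 1), ((c.1 ∩ d.1).card.choose j : ℚ) * a j := by
              rw [Nat.cast_sum]
              refine Finset.sum_congr rfl fun j _ => ?_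
              simp only [ha]
              push_cast
              ring
      calc ∑ j ∈ Finset.range (s + 1),
            a j * (∑ J ∈ (univ : Finset (Fin v)).powersetCard j, (y J) ^ 2)
          = ∑ j ∈ Finset.range (s + 1),
              a j * (∑ c, ∑ d, (x c * x d) * ((c.1 ∩ d.1).card.choose j : ℚ)) := by
            refine Finset.sum_congr rfl fun j _ => by rw [E4 j]
        _ = ∑ c, ∑ d, ∑ j ∈ Finset.range (s + 1),
              a j * ((x c * x d) * ((c.1 ∩ d.1).card.choose j : ℚ)) := by
            rw [Finset.sum_congr rfl fun j (_ : j ∈ Finset.range (s+1)) => Finset.mul_sum _ _ _]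
            rw [Finset.sum_comm]
            refine Finset.sum_congr rfl fun c _ => ?_
            rw [Finset.sum_congr rfl fun j (_ : j ∈ Finset.range (s+1)) => Finset.mul_sum _ _ _]
            exact Finset.sum_comm
        _ = ∑ c, ∑ d, (x c * x d) * ((ν c d : ℚ)) * ((v - t).choose (k - t) : ℚ) := by
            refine Finset.sum_congr rfl fun c _ => Finset.sum_congr rfl fun d _ => ?_
            rw [mul_assoc, mid c d, Finset.mul_sum]
            refine Finset.sum_congr rfl fun j _ => by ring
        _ = 0 := by
            rw [← lhs0]
            refine Finset.sum_congr rfl fun c _ => ?_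
            rw [Finset.sum_mul]
    -- nonnegativity lets us extract the top term
    have hnonneg : ∀ j ∈ Finset.range (s + 1),
        0 ≤ a j * (∑ J ∈ (univ : Finset (Fin v)).powersetCard j, (y J) ^ 2) := by
      intro j _
      have h1 : (0 : ℚ) ≤ a j := by rw [ha]; positivity
      have h2 : (0 : ℚ) ≤ ∑ J ∈ (univ : Finset (Fin v)).powersetCard j, (y J) ^ 2 :=
        Finset.sum_nonneg fun J _ => sq_nonneg _
      exact mul_nonneg h1 h2
    have htop := (Finset.sum_eq_zero_iff_of_nonneg hnonneg).1 key s (self_mem_range_succ s)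
    have has : (0 : ℚ) < a s := by
      have h1 : k - 2 * s + s = k - s := by omega
      have h2 : 0 < lam * (v - 2 * s).choose (k - s) :=
        Nat.mul_pos (by omega) (Nat.choose_pos (by omega))
      have h3 : (0 : ℚ) < ((lam * (v - 2 * s).choose (k - 2 * s + s) : ℕ) : ℚ) := by
        rw [h1]; exact_mod_cast h2
      exact h3
    have hsq : ∑ J ∈ (univ : Finset (Fin v)).powersetCard s, (y J) ^ 2 = 0 := by
      rcases mul_eq_zero.1 htop with h | h
      · exact absurd h (ne_of_gt has)
      · exact h
    have hyJ : ∀ J ∈ (univ : Finset (Fin v)).powersetCard s, y J = 0 := by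
      intro J hJ
      have := (Finset.sum_eq_zero_iff_of_nonneg fun J _ => sq_nonneg (y J)).1 hsq J hJ
      exact pow_eq_zero_iff (by norm_num) |>.1 this
    -- conclude x = 0
    funext c
    have hcJ : c.1 ∈ (univ : Finset (Fin v)).powersetCard s :=
      mem_powersetCard.2 ⟨subset_univ _, c.2⟩
    have hyc : y c.1 = x c := by
      simp only [hy]
      rw [Finset.sum_eq_single c]
      · simp
      · intro d _ hdc
        rw [if_neg]
        intro hsub
        exact hdc (Subtype.ext (Finset.eq_of_subset_of_card_le hsub (by rw [c.2, d.2])).symm)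
      · intro hc
        exact absurd (mem_univ c) hc
    have := hyJ c.1 hcJ
    rw [hyc] at this
    simpa using this
  -- now the rank computation
  have hker : LinearMap.ker (Matrix.mulVecLin Aᵀ) = ⊥ := by
    rw [LinearMap.ker_eq_bot']
    intro x hx0
    apply hcore
    intro b
    have h1 := congrFun hx0 b
    simp only [Matrix.mulVecLin_apply, Matrix.mulVec, dotProduct,
      Matrix.transpose_apply, hA, Matrix.of_apply, Pi.zero_apply, ite_mul, one_mul,
      zero_mul] at h1
    exact h1
  have hrank : Aᵀ.rank = Fintype.card {C : Finset (Fin v) // C.card = s} := by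
    rw [Matrix.rank, LinearMap.finrank_range_of_inj (LinearMap.ker_eq_bot.mp hker)]
    simp [Module.finrank_fintype_fun_eq_card]
  rw [← Matrix.rank_transpose, hrank, Fintype.card_finset_len, Fintype.card_fin]
end
end

section
/- Let v ≥ k ≥ 1, let B ⊆ X = {1,…,v} with |B| = k, and let J ⊆ B with |J| = j where 1 ≤ j ≤ k. Define the polynomial g_{B,J} = x^{B,j} − C(k,j)·x^J in ℂ[x_1,…,x_v]. Then for every subset C ⊆ X, g_{B,J}(c_C) ≠ 0 if and only if j ≤ |C ∩ B| < k. -/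
noncomputable section

variable {σ : Type*}

lemma choose_strict {j m k : ℕ} (hj : 1 ≤ j) (hjm : j ≤ m) (hmk : m < k) :
    m.choose j < k.choose j := by
  obtain ⟨s, rfl⟩ := Nat.exists_eq_add_of_le hj
  calc m.choose (1 + s) < (m + 1).choose (1 + s) := by
        rw [Nat.add_comm 1 s, Nat.choose_succ_succ]
        have : 0 < m.choose s := Nat.choose_pos (le_trans (Nat.le_add_left s 1) hjm)
        simp only [Nat.succ_eq_add_one]
        omega
    _ ≤ k.choose (1 + s) := Nat.choose_le_choose _ hmk


/-- evaluation of `g_{B,J} = x^{B,j} - C(k,j)·x^J` on the characteristic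
vector of `C` is nonzero iff `j ≤ |C ∩ B| < k`. -/
theorem gBJ_eval (v k j : ℕ) (hk : 1 ≤ k) (hkv : k ≤ v) (hj1 : 1 ≤ j) (hjk : j ≤ k)
    (B : Finset (Fin v)) (hB : B.card = k)
    (J : Finset (Fin v)) (hJB : J ⊆ B) (hJ : J.card = j) :
    ∀ C : Finset (Fin v),
      (MvPolynomial.eval (charVec C)
          ((∑ J' ∈ B.powersetCard j, ∏ i ∈ J', MvPolynomial.X i) -
            MvPolynomial.C ((k.choose j : ℕ) : ℂ) * ∏ i ∈ J, MvPolynomial.X i) ≠ 0 ↔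
        j ≤ (C ∩ B).card ∧ (C ∩ B).card < k) := by
  intro C
  have hprod : ∀ S : Finset (Fin v),
      MvPolynomial.eval (charVec C) (∏ i ∈ S, MvPolynomial.X i)
        = if S ⊆ C then (1 : ℂ) else 0 := by
    intro S
    rw [map_prod]
    simp only [MvPolynomial.eval_X, charVec]
    rw [Finset.prod_boole]
    congr 1
  have hsum : MvPolynomial.eval (charVec C)
      (∑ J' ∈ B.powersetCard j, ∏ i ∈ J', MvPolynomial.X i)
        = (((C ∩ B).card.choose j : ℕ) : ℂ) := by
    rw [map_sum]
    rw [Finset.sum_congr rfl (fun J' _ => hprod J')]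
    rw [Finset.sum_boole]
    congr 1
    rw [← Finset.card_powersetCard]
    congr 1
    ext S
    simp only [Finset.mem_filter, Finset.mem_powersetCard, Finset.subset_inter_iff]
    tauto
  rw [map_sub, map_mul, MvPolynomial.eval_C, hsum, hprod]
  have hmk : (C ∩ B).card ≤ k := hB ▸ Finset.card_le_card Finset.inter_subset_right
  by_cases hJC : J ⊆ C
  · have hjm : j ≤ (C ∩ B).card := by
      rw [← hJ]; exact Finset.card_le_card (Finset.subset_inter hJC hJB)
    simp only [hJC, if_pos, mul_one, ne_eq, sub_eq_zero]
    rw [Nat.cast_inj]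
    constructor
    · intro h
      exact ⟨hjm, lt_of_le_of_ne hmk (fun he => h (by rw [he]))⟩
    · rintro ⟨_, hlt⟩
      exact fun he => absurd he (ne_of_lt (choose_strict hj1 hjm hlt))
  · have hlt : (C ∩ B).card < k := by
      rcases lt_or_eq_of_le hmk with h | h
      · exact h
      · exfalso
        have : C ∩ B = B := Finset.eq_of_subset_of_card_le Finset.inter_subset_right (by omega)
        exact hJC (fun x hx => (Finset.mem_inter.mp (this ▸ hJB hx)).1)
    rw [if_neg hJC, mul_zero, sub_zero]
    simp only [ne_eq, Nat.cast_eq_zero, Nat.choose_eq_zero_iff]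
    omega
end
end

section
/- Let 2 ≤ k ≤ v and let ℬ be a family of k-element subsets of X = {1,…,v} which is non-empty and not equal to the family of all k-subsets of X. Then γ2(ℬ) ≤ k. -/
noncomputable section

variable {σ : Type*}

open MvPolynomial

/-- The ideal generated by the square relations. -/
def sqIdeal (σ : Type*) : Ideal (MvPolynomial σ ℂ) :=
  Ideal.span (Set.range fun i : σ => X i ^ 2 - X i)

/-- Indicator polynomial of the point `charVec A` on the cube. -/
def eIndic [Fintype σ] [DecidableEq σ] (A : Finset σ) : MvPolynomial σ ℂ :=
  (∏ i ∈ A, X i) * ∏ i ∈ Aᶜ, (1 - X i)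

lemma X_mul_eIndic [Fintype σ] [DecidableEq σ] (A : Finset σ) (i : σ) :
    X i * eIndic A - C (charVec A i) * eIndic A ∈ sqIdeal σ := by
  have hmem : (X i ^ 2 - X i : MvPolynomial σ ℂ) ∈ sqIdeal σ :=
    Ideal.subset_span ⟨i, rfl⟩
  by_cases h : i ∈ A
  · have key : X i * eIndic A - C (charVec A i) * eIndic A
        = (X i ^ 2 - X i) * ((∏ j ∈ A.erase i, X j) * ∏ j ∈ Aᶜ, (1 - X j)) := by
      rw [eIndic, ← Finset.mul_prod_erase A _ h, charVec]
      simp only [h, if_pos, map_one]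
      ring
    rw [key]
    exact Ideal.mul_mem_right _ _ hmem
  · have h' : i ∈ Aᶜ := Finset.mem_compl.2 h
    have key : X i * eIndic A - C (charVec A i) * eIndic A
        = (X i ^ 2 - X i) * (-((∏ j ∈ A, X j) * ∏ j ∈ Aᶜ.erase i, (1 - X j))) := by
      rw [eIndic, ← Finset.mul_prod_erase Aᶜ _ h', charVec]
      simp only [h, if_neg, not_false_iff, map_zero]
      ring
    rw [key]
    exact Ideal.mul_mem_right _ _ hmem

lemma mul_eIndic [Fintype σ] [DecidableEq σ] (A : Finset σ) (f : MvPolynomial σ ℂ) :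
    f * eIndic A - C (eval (charVec A) f) * eIndic A ∈ sqIdeal σ := by
  induction f using MvPolynomial.induction_on with
  | C a => simp
  | add f g hf hg =>
      have key : (f + g) * eIndic A - C (eval (charVec A) (f + g)) * eIndic A
          = (f * eIndic A - C (eval (charVec A) f) * eIndic A)
            + (g * eIndic A - C (eval (charVec A) g) * eIndic A) := by
        rw [map_add, map_add]; ring
      rw [key]; exact Ideal.add_mem _ hf hg
  | mul_X f i hf =>
      have key : f * X i * eIndic A - C (eval (charVec A) (f * X i)) * eIndic A
          = X i * (f * eIndic A - C (eval (charVec A) f) * eIndic A)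
            + C (eval (charVec A) f) *
              (X i * eIndic A - C (charVec A i) * eIndic A) := by
        rw [map_mul, eval_X, map_mul]; ring
      rw [key]
      exact Ideal.add_mem _ (Ideal.mul_mem_left _ _ hf)
        (Ideal.mul_mem_left _ _ (X_mul_eIndic A i))

lemma sum_eIndic [Fintype σ] [DecidableEq σ] :
    ∑ A ∈ (Finset.univ : Finset σ).powerset, eIndic A = 1 := by
  have h := Finset.prod_add (fun i : σ => (X i : MvPolynomial σ ℂ)) (fun i : σ => (1 - X i : MvPolynomial σ ℂ)) Finset.univ
  have h1 : ∀ i ∈ (Finset.univ : Finset σ), (X i + (1 - X i) : MvPolynomial σ ℂ) = 1 :=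
    fun i _ => by ring
  rw [Finset.prod_congr rfl h1, Finset.prod_const_one] at h
  rw [h]
  refine Finset.sum_congr rfl fun A _ => ?_
  rw [eIndic, Finset.compl_eq_univ_sdiff]

/-- for any non-empty, non-complete `k`-uniform hypergraph, `γ₂(ℬ) ≤ k`. -/
theorem gamma2_le_k (v k : ℕ) (hk : 2 ≤ k) (hkv : k ≤ v)
    (ℬ : Finset (Finset (Fin v))) (hcard : ∀ B ∈ ℬ, B.card = k) (hne : ℬ.Nonempty)
    (hnc : ℬ ≠ Finset.powersetCard k (Finset.univ : Finset (Fin v))) :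
    gamma2 ℬ ≤ k := by
  classical
  set G : Set (MvPolynomial (Fin v) ℂ) :=
    G0 (Fin v) k ∪ ((fun A : Finset (Fin v) => ∏ i ∈ A, X i) ''
      {A : Finset (Fin v) | A.card = k ∧ A ∉ ℬ}) with hG
  have hmemI : ∀ f : MvPolynomial (Fin v) ℂ,
      f ∈ designIdeal ℬ ↔ ∀ B ∈ ℬ, eval (charVec B) f = 0 := by
    intro f
    simp [designIdeal, Ideal.mem_iInf, RingHom.mem_ker]
  have hevalsum : ∀ A : Finset (Fin v), eval (charVec A) (∑ i, (X i : MvPolynomial (Fin v) ℂ))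
      = (A.card : ℂ) := by
    intro A
    simp [charVec, Finset.sum_boole]
  have hsq_sub : sqIdeal (Fin v) ≤ Ideal.span G := by
    apply Ideal.span_mono
    intro x hx
    exact Or.inl (Set.mem_insert_of_mem _ hx)
  have hp_mem : ((∑ i, X i) - C (k : ℂ) : MvPolynomial (Fin v) ℂ) ∈ G :=
    Or.inl (Set.mem_insert _ _)
  -- each indicator of a point not in ℬ lies in span G
  have hind : ∀ A : Finset (Fin v), A ∉ ℬ → eIndic A ∈ Ideal.span G := by
    intro A hA
    by_cases hc : A.card = k
    · have hm : (∏ i ∈ A, X i : MvPolynomial (Fin v) ℂ) ∈ G :=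
        Or.inr ⟨A, ⟨hc, hA⟩, rfl⟩
      rw [eIndic, mul_comm]
      exact Ideal.mul_mem_left _ _ (Ideal.subset_span hm)
    · have hc' : ((A.card : ℂ) - k) ≠ 0 := by
        intro h
        apply hc
        have : (A.card : ℂ) = (k : ℂ) := by linear_combination h
        exact_mod_cast this
      have hkey := mul_eIndic A ((∑ i, X i) - C (k : ℂ))
      have heval : eval (charVec A) ((∑ i, X i) - C (k : ℂ)) = (A.card : ℂ) - k := by
        rw [map_sub, hevalsum, eval_C]
      rw [heval] at hkey
      have h1 : ((∑ i, X i) - C (k : ℂ)) * eIndic A ∈ Ideal.span G :=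
        Ideal.mul_mem_right _ _ (Ideal.subset_span hp_mem)
      have h2 : C ((A.card : ℂ) - k) * eIndic A ∈ Ideal.span G := by
        have := Ideal.sub_mem _ h1 (hsq_sub hkey)
        simpa using this
      have h3 : C ((A.card : ℂ) - k)⁻¹ * (C ((A.card : ℂ) - k) * eIndic A)
          ∈ Ideal.span G := Ideal.mul_mem_left _ _ h2
      rwa [← mul_assoc, ← map_mul, inv_mul_cancel₀ hc', map_one, one_mul] at h3
  apply Nat.sInf_le
  refine ⟨G, ?_, ?_⟩
  · -- degree bounds
    rintro g (hg | ⟨A, ⟨hAc, _⟩, rfl⟩)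
    · rcases hg with hg | ⟨i, rfl⟩
      · rw [hg]
        refine le_trans (totalDegree_sub _ _) ?_
        refine max_le (le_trans (totalDegree_finset_sum _ _) ?_) ?_
        · refine le_trans (Finset.sup_le fun i _ => ?_) (le_trans one_le_two hk)
          exact le_of_eq (totalDegree_X i)
        · exact le_of_eq_of_le (totalDegree_C _) (Nat.zero_le k)
      · refine le_trans (totalDegree_sub _ _) (max_le ?_ ?_)
        · rw [totalDegree_X_pow]; exact hk
        · rw [totalDegree_X]; exact le_trans one_le_two hk
    · refine le_trans (totalDegree_finset_prod _ _) ?_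
      calc ∑ i ∈ A, (X i : MvPolynomial (Fin v) ℂ).totalDegree
          = ∑ i ∈ A, 1 := Finset.sum_congr rfl fun i _ => totalDegree_X i
        _ = A.card := by simp
        _ ≤ k := le_of_eq hAc
  · -- span equality
    apply le_antisymm
    · rw [Ideal.span_le]
      rintro g hg
      rw [SetLike.mem_coe, hmemI]
      intro B hB
      rcases hg with (hg | ⟨i, rfl⟩) | ⟨A, ⟨hAc, hAB⟩, rfl⟩
      · rw [hg, map_sub, hevalsum, eval_C, hcard B hB, sub_self]
      · simp only [map_sub, map_pow, eval_X, charVec]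
        by_cases h : i ∈ B <;> simp [h]
      · rw [eval_prod]
        have : ∃ i ∈ A, i ∉ B := by
          by_contra hcon
          push_neg at hcon
          have hsub : A ⊆ B := hcon
          have : A = B := Finset.eq_of_subset_of_card_le hsub
            (by rw [hcard B hB, hAc])
          exact hAB (this ▸ hB)
        obtain ⟨i, hiA, hiB⟩ := this
        refine Finset.prod_eq_zero hiA ?_
        simp [charVec, hiB]
    · intro f hf
      rw [hmemI] at hf
      have hdecomp : f - ∑ A ∈ (Finset.univ : Finset (Fin v)).powerset,
          C (eval (charVec A) f) * eIndic A ∈ sqIdeal (Fin v) := by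
        have key : f - ∑ A ∈ (Finset.univ : Finset (Fin v)).powerset,
            C (eval (charVec A) f) * eIndic A
            = ∑ A ∈ (Finset.univ : Finset (Fin v)).powerset,
              (f * eIndic A - C (eval (charVec A) f) * eIndic A) := by
          rw [Finset.sum_sub_distrib, ← Finset.mul_sum, sum_eIndic, mul_one]
        rw [key]
        exact Ideal.sum_mem _ fun A _ => mul_eIndic A f
      have hsum : ∑ A ∈ (Finset.univ : Finset (Fin v)).powerset,
          C (eval (charVec A) f) * eIndic A ∈ Ideal.span G := by
        refine Ideal.sum_mem _ fun A _ => ?_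
        by_cases hA : A ∈ ℬ
        · rw [hf A hA, map_zero, zero_mul]
          exact Ideal.zero_mem _
        · exact Ideal.mul_mem_left _ _ (hind A hA)
      have := Ideal.add_mem _ (hsq_sub hdecomp) hsum
      simpa using this
end
end
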